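/- arXiv:2402.03198 — 7 statements merged into one kernel-verified Lean document; each statement's English description precedes it below -/
import Mathlib

section
/- Let n ≥ 0 and let λ ∈ ℝ^{n+1} have all coordinates strictly positive. Set ρ = ∑_{i=0}^{n} λ_i and θ(λ) = λ/ρ, and note that the Fréchet derivative of θ at λ is Dθ(λ)v = v/ρ − (∑_{i} v_i)·λ/ρ². Then for all vectors v_1, …, v_n ∈ ℝ^{n+1}: det[θ(λ), Dθ(λ)v_1, …, Dθ(λ)v_n] = ρ^{−(n+1)} · det[λ, v_1, …, v_n], where det[w_0,…,w_n] is the determinant of the matrix with columns w_0,…,w_n. -/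
open Matrix

/-- For `λ ∈ ℝ^{n+1}` with positive coordinates, `ρ = ∑ λ_i`,
`θ(λ) = λ/ρ`, and `Dθ(λ)v = v/ρ − (∑_i v_i)·λ/ρ²`, one has
`det[θ(λ), Dθ(λ)v_1, …, Dθ(λ)v_n] = ρ^{−(n+1)} · det[λ, v_1, …, v_n]`. -/
theorem statement3 (n : ℕ) (l : Fin (n + 1) → ℝ) (hl : ∀ i, 0 < l i)
    (v : Fin n → Fin (n + 1) → ℝ) :
    Matrix.det (Matrix.of fun (i j : Fin (n + 1)) =>
      (Fin.cons (fun i' => l i' / ∑ i'', l i'')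
        (fun k => fun i' =>
          v k i' / (∑ i'', l i'') - (∑ i'', v k i'') * l i' / (∑ i'', l i'') ^ 2) :
          Fin (n + 1) → Fin (n + 1) → ℝ) j i)
    = ((∑ i'', l i'') ^ (n + 1))⁻¹ *
      Matrix.det (Matrix.of fun (i j : Fin (n + 1)) =>
        (Fin.cons l v : Fin (n + 1) → Fin (n + 1) → ℝ) j i) := by
  have hρ : (0:ℝ) < ∑ i'', l i'' := Finset.sum_pos (fun i _ => hl i) Finset.univ_nonempty
  set ρ : ℝ := ∑ i'', l i'' with hρdef
  have hρ0 : ρ ≠ 0 := ne_of_gt hρ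
  set N : Matrix (Fin (n+1)) (Fin (n+1)) ℝ :=
    Matrix.of (Fin.cons (fun i' => l i' / ρ)
      (fun k => fun i' => v k i' / ρ - (∑ i'', v k i'') * l i' / ρ ^ 2)) with hN
  set P : Matrix (Fin (n+1)) (Fin (n+1)) ℝ :=
    Matrix.of (Fin.cons l v) with hP
  have h1 : (Matrix.of fun (i j : Fin (n + 1)) =>
      (Fin.cons (fun i' => l i' / ρ)
        (fun k => fun i' => v k i' / ρ - (∑ i'', v k i'') * l i' / ρ ^ 2) :
          Fin (n + 1) → Fin (n + 1) → ℝ) j i) = Nᵀ := rfl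
  have h2 : (Matrix.of fun (i j : Fin (n + 1)) =>
      (Fin.cons l v : Fin (n + 1) → Fin (n + 1) → ℝ) j i) = Pᵀ := rfl
  rw [h1, h2, Matrix.det_transpose, Matrix.det_transpose]
  set C : Matrix (Fin (n+1)) (Fin (n+1)) ℝ :=
    Matrix.of (fun i j => if j = 0 then
      (Fin.cons ρ⁻¹ (fun m => -(∑ i'', v m i'') / ρ ^ 2) : Fin (n+1) → ℝ) i
      else if i = j then ρ⁻¹ else 0) with hC
  have hNCP : N = C * P := by
    ext i j
    rw [Matrix.mul_apply]
    refine Fin.cases ?_ ?_ i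
    · rw [Finset.sum_eq_single 0]
      · simp [hC, hN, hP, div_eq_inv_mul]
      · intro b _ hb
        simp [hC, hN, hP, hb, Ne.symm hb]
      · simp
    · intro m
      have key : ∀ k, C m.succ k * P k j =
          (if k = 0 then (-(∑ i'', v m i'')) / ρ ^ 2 * l j else 0)
          + (if k = m.succ then ρ⁻¹ * v m j else 0) := by
        intro k
        rcases eq_or_ne k 0 with rfl | hk0
        · simp [hC, hP, Fin.succ_ne_zero, (Fin.succ_ne_zero m).symm]
        · rcases Fin.eq_succ_of_ne_zero hk0 with ⟨p, rfl⟩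
          rcases eq_or_ne p m with rfl | hp
          · simp [hC, hP, Fin.succ_ne_zero]
          · simp [hC, hP, Fin.succ_ne_zero, Fin.succ_inj, hp, Ne.symm hp]
      rw [Finset.sum_congr rfl (fun k _ => key k), Finset.sum_add_distrib,
        Finset.sum_ite_eq' Finset.univ (0 : Fin (n+1)),
        Finset.sum_ite_eq' Finset.univ (m.succ)]
      simp [hN]
      ring
  have hCtri : C.BlockTriangular OrderDual.toDual := by
    intro i j hij
    have hij' : i < j := hij
    have hj0 : j ≠ 0 := Fin.pos_iff_ne_zero.mp (lt_of_le_of_lt (Fin.zero_le i) hij')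
    simp [hC, hj0, ne_of_lt hij']
  have hdetC : C.det = (ρ ^ (n+1))⁻¹ := by
    rw [Matrix.det_of_lowerTriangular C hCtri]
    have : ∀ i : Fin (n+1), C i i = ρ⁻¹ := by
      intro i
      rcases eq_or_ne i 0 with rfl | hi
      · simp [hC]
      · simp [hC, hi]
    simp [this, Finset.prod_const, ← inv_pow]
  rw [hNCP, Matrix.det_mul, hdetC]
end

section
/- Let V be a finite set with |V| = n+1, and let (V_0, …, V_m) and (V'_0, …, V'_m) be two ordered partitions of V into m+1 nonempty parts. Let λ ∈ ℝ^V have all coordinates strictly positive, set ρ'_{j'} = ∑_{i∈V'_{j'}} λ_i, and define the (m+1)×(m+1) matrix M by M_{j', j} = ∑_{i ∈ V'_{j'} ∩ V_j} λ_i. Then |det M| ≤ ∏_{j'=0}^{m} ρ'_{j'}, with equality if and only if the two partitions coincide as unordered families of sets, i.e., {V_0, …, V_m} = {V'_0, …, V'_m}. -/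
/-!
Expanding `det M` by the Leibniz formula and dropping the signs bounds `|det M|` by the sum,
over permutations `σ`, of the transversal products `∏ M j' (σ j')`, whereas
`∏ ρ' j' = ∏ j', ∑ j, M j' j` is the same sum taken over all maps `Fin (m+1) → Fin (m+1)`.
Equality therefore kills every non-injective transversal. The row sums `ρ'` are positive, so
some permutation `σ` has a nonzero transversal; redirecting `σ` at row `j'` to any nonzero entry
`M j' j` gives another nonzero transversal, which must be injective, forcing `j = σ j'`. Thus
`V'_{j'}` meets only `V_{σ j'}`, i.e. the two partitions agree up to relabelling.
-/

open Finset Equiv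

namespace Matrix

variable {n R : Type*} [Fintype n] [DecidableEq n]

theorem prod_sum_eq_sum_perm_add_sum_not_injective [CommSemiring R] (M : Matrix n n R) :
    ∏ i, ∑ j, M i j = ∑ σ : Perm n, ∏ i, M i (σ i)
      + ∑ f : n → n with ¬ Function.Injective f, ∏ i, M i (f i) := by
  rw [Fintype.prod_sum (fun i j => M i j), ← sum_filter_add_sum_filter_not univ Function.Injective]
  congr 1
  refine (sum_bij (fun (σ : Perm n) _ => ⇑σ) (fun σ _ => by simpa using σ.injective)
    (fun _ _ _ _ h => Equiv.coe_fn_injective h) (fun f hf => ?_) (fun _ _ => rfl)).symm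
  exact ⟨Equiv.ofBijective f (mem_filter.mp hf).2.bijective_of_finite, mem_univ _, rfl⟩

theorem exists_perm_forall_ne_zero_of_det_ne_zero [CommRing R] {M : Matrix n n R}
    (hM : M.det ≠ 0) : ∃ σ : Perm n, ∀ i, M i (σ i) ≠ 0 := by
  contrapose! hM
  rw [← det_transpose, det_apply]
  refine sum_eq_zero fun σ _ => ?_
  obtain ⟨i, hi⟩ := hM σ
  rw [prod_eq_zero (mem_univ i) (by simpa using hi), smul_zero]

section Ordered

variable [CommRing R] [LinearOrder R] [IsStrictOrderedRing R] {M : Matrix n n R}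

theorem abs_det_le_sum_perm_prod (hM : ∀ i j, 0 ≤ M i j) :
    |M.det| ≤ ∑ σ : Perm n, ∏ i, M i (σ i) := by
  rw [← det_transpose, det_apply]
  refine (abs_sum_le_sum_abs _ _).trans_eq (sum_congr rfl fun σ _ => ?_)
  simp only [transpose_apply]
  rw [Units.smul_def, abs_zsmul, Perm.sign_abs, one_smul,
    abs_of_nonneg (prod_nonneg fun i _ => hM _ _)]

theorem abs_det_le_prod_sum (hM : ∀ i j, 0 ≤ M i j) : |M.det| ≤ ∏ i, ∑ j, M i j := by
  rw [prod_sum_eq_sum_perm_add_sum_not_injective]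
  exact (abs_det_le_sum_perm_prod hM).trans
    (le_add_of_nonneg_right (sum_nonneg fun f _ => prod_nonneg fun i _ => hM _ _))

theorem prod_eq_zero_of_abs_det_eq_prod_sum (hM : ∀ i j, 0 ≤ M i j)
    (h : |M.det| = ∏ i, ∑ j, M i j) {f : n → n} (hf : ¬ Function.Injective f) :
    ∏ i, M i (f i) = 0 := by
  have hnonneg : ∀ g ∈ univ.filter (fun g : n → n => ¬ Function.Injective g),
      0 ≤ ∏ i, M i (g i) := fun g _ => prod_nonneg fun i _ => hM _ _
  have hzero : ∑ g : n → n with ¬ Function.Injective g, ∏ i, M i (g i) = 0 := by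
    refine le_antisymm ?_ (sum_nonneg hnonneg)
    have hle := abs_det_le_sum_perm_prod hM
    rw [h, prod_sum_eq_sum_perm_add_sum_not_injective] at hle
    linarith
  exact (sum_eq_zero_iff_of_nonneg hnonneg).mp hzero f (by simpa using hf)

theorem eq_apply_of_ne_zero {σ : Perm n} (hσ : ∀ i, M i (σ i) ≠ 0)
    (hinj : ∀ f : n → n, ¬ Function.Injective f → ∏ i, M i (f i) = 0)
    {i j : n} (hij : M i j ≠ 0) : j = σ i := by
  -- Redirecting `σ` at row `i` to the nonzero entry `M i j` keeps the transversal nonzero.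
  have hupdate : Function.Injective (Function.update σ i j) := by
    by_contra hf
    refine prod_ne_zero_iff.mpr (fun k _ => ?_) (hinj _ hf)
    rcases eq_or_ne k i with rfl | hk
    · simpa using hij
    · simpa [hk] using hσ k
  have hsymm : σ.symm j = i := hupdate <| by
    rcases eq_or_ne (σ.symm j) i with h | h
    · rw [h]
    · simp [h]
  rw [← hsymm, apply_symm_apply]

theorem abs_det_eq_prod_sum_of_forall_ne_zero {σ : Perm n} (hM : ∀ i j, 0 ≤ M i j)
    (hσ : ∀ i j, M i j ≠ 0 → j = σ i) : |M.det| = ∏ i, ∑ j, M i j := by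
  have hdiag : M.submatrix id σ = diagonal fun i => M i (σ i) := by
    ext i j
    rcases eq_or_ne i j with rfl | hij
    · simp
    · rw [diagonal_apply_ne _ hij, submatrix_apply, id]
      by_contra h
      exact hij (σ.injective (hσ i (σ j) h)).symm
  have hrow : ∀ i, ∑ j, M i j = M i (σ i) := fun i =>
    sum_eq_single _ (fun j _ hj => by_contra fun h => hj (hσ i j h)) (by simp)
  have habs := congrArg (|·|) (det_permute' σ M)
  simp only [hdiag, det_diagonal, abs_mul, ← Int.cast_abs, Perm.sign_abs, Int.cast_one,
    one_mul] at habs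
  rw [← habs, abs_of_nonneg (prod_nonneg fun i _ => hM _ _)]
  exact prod_congr rfl fun i _ => (hrow i).symm

theorem abs_det_eq_prod_sum_iff (hM : ∀ i j, 0 ≤ M i j) (hpos : ∀ i, 0 < ∑ j, M i j) :
    |M.det| = ∏ i, ∑ j, M i j ↔ ∃ σ : Perm n, ∀ i j, M i j ≠ 0 → j = σ i := by
  refine ⟨fun h => ?_, fun ⟨σ, hσ⟩ => abs_det_eq_prod_sum_of_forall_ne_zero hM hσ⟩
  have hdet : M.det ≠ 0 := by
    rw [← abs_ne_zero, h]
    exact (prod_pos fun i _ => hpos i).ne'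
  obtain ⟨σ, hσ⟩ := exists_perm_forall_ne_zero_of_det_ne_zero hdet
  exact ⟨σ, fun i j => eq_apply_of_ne_zero hσ fun f => prod_eq_zero_of_abs_det_eq_prod_sum hM h⟩

end Ordered

end Matrix

theorem statement5_general {V : Type*} [Fintype V] (m : ℕ)
    (idx idx' : V → Fin (m + 1))
    (hidx' : Function.Surjective idx')
    (l : V → ℝ) (hl : ∀ i, 0 < l i) :
    |Matrix.det (Matrix.of fun (j' j : Fin (m + 1)) =>
        ∑ i ∈ Finset.univ.filter (fun i => idx' i = j' ∧ idx i = j), l i)|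
      ≤ ∏ j', ∑ i ∈ Finset.univ.filter (fun i => idx' i = j'), l i
    ∧ (|Matrix.det (Matrix.of fun (j' j : Fin (m + 1)) =>
          ∑ i ∈ Finset.univ.filter (fun i => idx' i = j' ∧ idx i = j), l i)|
        = ∏ j', ∑ i ∈ Finset.univ.filter (fun i => idx' i = j'), l i
      ↔ ∃ σ : Equiv.Perm (Fin (m + 1)), ∀ i, idx' i = σ (idx i)) := by
  set M : Matrix (Fin (m + 1)) (Fin (m + 1)) ℝ := Matrix.of fun j' j =>
    ∑ i ∈ univ.filter (fun i => idx' i = j' ∧ idx i = j), l i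
  have hM : ∀ j' j, 0 ≤ M j' j := fun _ _ => sum_nonneg fun i _ => (hl i).le
  have hrow : ∀ j', ∑ j, M j' j = ∑ i ∈ univ.filter (fun i => idx' i = j'), l i := fun j' => by
    simp only [M, Matrix.of_apply, ← filter_filter]
    exact sum_fiberwise _ _ _
  have hpos : ∀ j', 0 < ∑ j, M j' j := fun j' => by
    obtain ⟨i, rfl⟩ := hidx' j'
    rw [hrow]
    exact sum_pos (fun k _ => hl k) ⟨i, by simp⟩
  have hsupp : ∀ j' j, M j' j ≠ 0 ↔ ∃ i, idx' i = j' ∧ idx i = j := fun j' j => by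
    rw [← (hM j' j).lt_iff_ne']
    simp only [M, Matrix.of_apply, sum_pos_iff_of_nonneg fun i _ => (hl i).le]
    simp [hl]
  simp only [← hrow]
  refine ⟨Matrix.abs_det_le_prod_sum hM, (Matrix.abs_det_eq_prod_sum_iff hM hpos).trans ?_⟩
  simp only [hsupp, forall_exists_index, and_imp, forall_apply_eq_imp_iff₂]
  exact ⟨fun ⟨σ, h⟩ => ⟨σ.symm, fun i => by rw [h _ i rfl, symm_apply_apply]⟩,
    fun ⟨σ, h⟩ => ⟨σ.symm, fun j' i hi => by rw [← hi, h, symm_apply_apply]⟩⟩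

/-- For two ordered partitions of `V` (`|V| = n+1`) into `m+1` nonempty
parts (encoded by surjective `idx, idx' : V → Fin (m+1)`) and `λ` with strictly positive
coordinates, the matrix `M_{j',j} = ∑_{i ∈ V'_{j'} ∩ V_j} λ_i` satisfies
`|det M| ≤ ∏_{j'} ρ'_{j'}`, with equality iff the two partitions coincide as unordered
families (i.e. there is a permutation `σ` with `V'_{σ j} = V_j` for all `j`). -/
theorem statement5 {V : Type*} [Fintype V] [DecidableEq V] (n m : ℕ)
    (hV : Fintype.card V = n + 1)
    (idx idx' : V → Fin (m + 1))
    (hidx : Function.Surjective idx) (hidx' : Function.Surjective idx')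
    (l : V → ℝ) (hl : ∀ i, 0 < l i) :
    |Matrix.det (Matrix.of fun (j' j : Fin (m + 1)) =>
        ∑ i ∈ Finset.univ.filter (fun i => idx' i = j' ∧ idx i = j), l i)|
      ≤ ∏ j', ∑ i ∈ Finset.univ.filter (fun i => idx' i = j'), l i
    ∧ (|Matrix.det (Matrix.of fun (j' j : Fin (m + 1)) =>
          ∑ i ∈ Finset.univ.filter (fun i => idx' i = j' ∧ idx i = j), l i)|
        = ∏ j', ∑ i ∈ Finset.univ.filter (fun i => idx' i = j'), l i
      ↔ ∃ σ : Equiv.Perm (Fin (m + 1)), ∀ i, idx' i = σ (idx i)) :=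
  statement5_general m idx idx' hidx' l hl
end

section
/- Let V be a finite set with |V| = n+1, let (V_0, …, V_m) and (V'_0, …, V'_m) be two ordered partitions of V into m+1 nonempty parts, and set k = n − m. Let λ ∈ ℝ^V have all coordinates strictly positive, and define X_j = ∑_{i∈V_j} λ_i e_i ∈ ℝ^V and X'_j = ∑_{i∈V'_j} λ_i e_i ∈ ℝ^V. Suppose v_1, …, v_k ∈ ℝ^V satisfy ∑_{i∈V'_j} (v_l)_i = 0 for every j ∈ {0,…,m} and every l ∈ {1,…,k}. Then |det[X_0, …, X_m, v_1, …, v_k]| ≤ |det[X'_0, …, X'_m, v_1, …, v_k]|, where det[w_0,…,w_n] is the determinant of the matrix whose columns are the n+1 listed vectors of ℝ^V. -/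
open Finset in
/-- Permanent-type bound: for a matrix with nonnegative entries, the absolute
value of the determinant is at most the product of the row sums. -/
lemma abs_det_le_prod_row_sums {ι : Type*} [Fintype ι] [DecidableEq ι]
    (a : Matrix ι ι ℝ) (ha : ∀ i j, 0 ≤ a i j) :
    |a.det| ≤ ∏ i, ∑ j, a i j := by
  classical
  have hperm : ∀ σ : Equiv.Perm ι, ∏ i, a (σ i) i = ∏ i, a i (σ⁻¹ i) := by
    intro σ
    rw [← Equiv.prod_comp σ (fun i => a i (σ⁻¹ i))]
    simp
  calc |a.det| = |∑ σ : Equiv.Perm ι, Equiv.Perm.sign σ • ∏ i, a (σ i) i| := by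
        rw [Matrix.det_apply]
    _ ≤ ∑ σ : Equiv.Perm ι, |Equiv.Perm.sign σ • ∏ i, a (σ i) i| :=
        Finset.abs_sum_le_sum_abs _ _
    _ = ∑ σ : Equiv.Perm ι, ∏ i, a (σ i) i := by
        refine Finset.sum_congr rfl fun σ _ => ?_
        rcases Int.units_eq_one_or (Equiv.Perm.sign σ) with h | h <;>
          simp [h, Units.smul_def, abs_of_nonneg (Finset.prod_nonneg fun i _ => ha _ _)]
    _ = ∑ σ : Equiv.Perm ι, ∏ i, a i (σ⁻¹ i) := Finset.sum_congr rfl fun σ _ => hperm σ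
    _ = ∑ σ : Equiv.Perm ι, ∏ i, a i (σ i) :=
        Equiv.sum_comp (Equiv.inv (Equiv.Perm ι)) (fun σ => ∏ i, a i (σ i))
    _ = ∑ f ∈ Finset.univ.image (fun σ : Equiv.Perm ι => (σ : ι → ι)), ∏ i, a i (f i) := by
        rw [Finset.sum_image]
        intro x _ y _ h
        exact Equiv.coe_fn_injective h
    _ ≤ ∑ f : ι → ι, ∏ i, a i (f i) := by
        refine Finset.sum_le_sum_of_subset_of_nonneg (Finset.subset_univ _) ?_
        intro f _ _
        exact Finset.prod_nonneg fun i _ => ha _ _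
    _ = ∏ i, ∑ j, a i j := (Finset.prod_univ_sum _ _).symm

/-- Two ordered partitions of `V` (`|V| = n+1`, `k = n − m`) into `m+1`
nonempty parts are encoded by surjective `idx, idx' : V → Fin (m+1)`; the identification
`e : Fin (m+1) ⊕ Fin k ≃ V` fixes an ordering of the coordinates (rows).  With
`X_j = ∑_{i∈V_j} λ_i e_i`, `X'_j = ∑_{i∈V'_j} λ_i e_i` and vectors `v_1,…,v_k` satisfying
`∑_{i∈V'_j} (v_l)_i = 0` for all `j, l`, one has
`|det[X_0,…,X_m,v_1,…,v_k]| ≤ |det[X'_0,…,X'_m,v_1,…,v_k]|`. -/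
theorem statement6 {V : Type*} [Fintype V] [DecidableEq V] (n m k : ℕ)
    (hn : n = m + k) (e : (Fin (m + 1) ⊕ Fin k) ≃ V)
    (idx idx' : V → Fin (m + 1))
    (hidx : Function.Surjective idx) (hidx' : Function.Surjective idx')
    (l : V → ℝ) (hl : ∀ i, 0 < l i)
    (v : Fin k → V → ℝ)
    (hv : ∀ (j : Fin (m + 1)) (p : Fin k),
      ∑ i ∈ Finset.univ.filter (fun i => idx' i = j), v p i = 0) :
    |Matrix.det (Matrix.of fun (r c : Fin (m + 1) ⊕ Fin k) =>
        Sum.elim (fun j (i : V) => if idx i = j then l i else 0) v c (e r))|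
      ≤ |Matrix.det (Matrix.of fun (r c : Fin (m + 1) ⊕ Fin k) =>
        Sum.elim (fun j (i : V) => if idx' i = j then l i else 0) v c (e r))| := by
  classical
  set M : Matrix (Fin (m + 1) ⊕ Fin k) (Fin (m + 1) ⊕ Fin k) ℝ :=
    Matrix.of fun r c => Sum.elim (fun j (i : V) => if idx i = j then l i else 0) v c (e r)
    with hMdef
  set M' : Matrix (Fin (m + 1) ⊕ Fin k) (Fin (m + 1) ⊕ Fin k) ℝ :=
    Matrix.of fun r c => Sum.elim (fun j (i : V) => if idx' i = j then l i else 0) v c (e r)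
    with hM'def
  set R : Matrix (Fin (m + 1)) (Fin (m + 1) ⊕ Fin k) ℝ :=
    Matrix.of (fun j r => if idx' (e r) = j then (1 : ℝ) else 0) with hRdef
  set r' : Fin (m + 1) → ℝ :=
    fun j => ∑ i ∈ Finset.univ.filter (fun i => idx' i = j), l i with hr'def
  have hr'pos : ∀ j, 0 < r' j := by
    intro j
    obtain ⟨i0, hi0⟩ := hidx' j
    exact Finset.sum_pos (fun i _ => hl i) ⟨i0, by simp [hi0]⟩
  set a : Matrix (Fin (m + 1)) (Fin (m + 1)) ℝ :=
    fun j j'' => ∑ i ∈ Finset.univ.filter (fun i => idx' i = j),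
      (if idx i = j'' then l i else 0) with hadef
  have ha_nonneg : ∀ j j'', 0 ≤ a j j'' := by
    intro j j''
    refine Finset.sum_nonneg fun i _ => ?_
    split <;> [exact (hl i).le; exact le_rfl]
  have ha_rowsum : ∀ j, ∑ j'', a j j'' = r' j := by
    intro j
    show ∑ j'', ∑ i ∈ Finset.univ.filter (fun i => idx' i = j), (if idx i = j'' then l i else 0)
      = ∑ i ∈ Finset.univ.filter (fun i => idx' i = j), l i
    rw [Finset.sum_comm]
    refine Finset.sum_congr rfl fun i _ => ?_
    simp
  -- a helper for sums against the indicator of a fiber of `idx'`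
  have hsum : ∀ (j : Fin (m + 1)) (f : V → ℝ),
      (∑ x : V, (if idx' x = j then (1 : ℝ) else 0) * f x)
        = ∑ i ∈ Finset.univ.filter (fun i => idx' i = j), f i := by
    intro j f
    rw [Finset.sum_filter]
    refine Finset.sum_congr rfl fun i _ => ?_
    by_cases h1 : idx' i = j <;> simp [h1]
  -- products with the row-sum matrix R
  have hRM' : R * M' = Matrix.of (fun j s =>
      Sum.elim (fun j'' => if j = j'' then r' j else 0) (fun _ => 0) s) := by
    ext j s
    rw [Matrix.mul_apply]
    rw [← Equiv.sum_comp e.symm (fun r => R j r * M' r s)]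
    cases s with
    | inl j'' =>
      simp only [hRdef, hMdef, hM'def, Matrix.of_apply, Sum.elim_inl, Equiv.apply_symm_apply]
      rw [hsum j (fun x => if idx' x = j'' then l x else 0)]
      by_cases hjj : j = j''
      · subst hjj
        rw [if_pos rfl]
        show _ = ∑ i ∈ Finset.univ.filter (fun i => idx' i = j), l i
        refine Finset.sum_congr rfl fun i hi => ?_
        rw [if_pos (Finset.mem_filter.mp hi).2]
      · rw [if_neg hjj]
        refine Finset.sum_eq_zero fun i hi => ?_
        have := (Finset.mem_filter.mp hi).2
        rw [if_neg (by rw [this]; exact hjj)]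
    | inr p =>
      simp only [hRdef, hM'def, Matrix.of_apply, Sum.elim_inr, Equiv.apply_symm_apply]
      rw [hsum j (v p)]
      exact hv j p
  have hRM : R * M = Matrix.of (fun j s =>
      Sum.elim (fun j'' => a j j'') (fun _ => 0) s) := by
    ext j s
    rw [Matrix.mul_apply]
    rw [← Equiv.sum_comp e.symm (fun r => R j r * M r s)]
    cases s with
    | inl j'' =>
      simp only [hRdef, hMdef, Matrix.of_apply, Sum.elim_inl, Equiv.apply_symm_apply]
      rw [hsum j (fun x => if idx x = j'' then l x else 0)]
    | inr p =>
      simp only [hRdef, hMdef, Matrix.of_apply, Sum.elim_inr, Equiv.apply_symm_apply]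
      rw [hsum j (v p)]
      exact hv j p
  by_cases hdet : M'.det = 0
  · -- degenerate case : the columns of M' are dependent, with zero coefficients on
    -- the first block, hence the v's are dependent and det M = 0 as well
    obtain ⟨t, ht0, htv⟩ := Matrix.exists_mulVec_eq_zero_iff.mpr hdet
    have hRt : (R * M').mulVec t = 0 := by
      rw [← Matrix.mulVec_mulVec, htv, Matrix.mulVec_zero]
    have hinl : ∀ j, t (Sum.inl j) = 0 := by
      intro j
      have h1 := congrFun hRt j
      rw [hRM'] at h1
      simp only [Matrix.mulVec, dotProduct, Matrix.of_apply, Pi.zero_apply,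
        Fintype.sum_sum_type, Sum.elim_inl, Sum.elim_inr, zero_mul,
        Finset.sum_const_zero, add_zero, ite_mul] at h1
      rw [Finset.sum_ite_eq (Finset.univ : Finset (Fin (m + 1))) j
        (fun j'' => r' j * t (Sum.inl j''))] at h1
      simp only [Finset.mem_univ, if_true] at h1
      exact (mul_eq_zero.mp h1).resolve_left (hr'pos j).ne'
    have hMt : M.mulVec t = 0 := by
      funext r
      have h2 := congrFun htv r
      simp only [Matrix.mulVec, dotProduct, Fintype.sum_sum_type, hMdef, hM'def,
        Matrix.of_apply, Sum.elim_inl, Sum.elim_inr, hinl, mul_zero,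
        Finset.sum_const_zero, zero_add, Pi.zero_apply] at h2 ⊢
      exact h2
    have hdM : M.det = 0 := Matrix.exists_mulVec_eq_zero_iff.mp ⟨t, ht0, hMt⟩
    simp [hdM, hdet]
  · -- nondegenerate case
    have hU : IsUnit M'.det := isUnit_iff_ne_zero.mpr hdet
    set C : Matrix (Fin (m + 1) ⊕ Fin k) (Fin (m + 1) ⊕ Fin k) ℝ := M'⁻¹ * M with hCdef
    have hMC : M = M' * C := by
      rw [hCdef, ← Matrix.mul_assoc, Matrix.mul_nonsing_inv _ hU, Matrix.one_mul]
    have hRMC : R * M = (R * M') * C := by rw [Matrix.mul_assoc, ← hMC]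
    have hCtop : ∀ j s, r' j * C (Sum.inl j) s
        = Sum.elim (fun j'' => a j j'') (fun _ => (0 : ℝ)) s := by
      intro j s
      have h := congrFun (congrFun hRMC j) s
      rw [hRM, hRM'] at h
      rw [Matrix.mul_apply] at h
      simp only [Matrix.of_apply, Fintype.sum_sum_type, Sum.elim_inl, Sum.elim_inr,
        zero_mul, Finset.sum_const_zero, add_zero, ite_mul] at h
      rw [Finset.sum_ite_eq (Finset.univ : Finset (Fin (m + 1))) j
        (fun j'' => r' j * C (Sum.inl j'') s)] at h
      simp only [Finset.mem_univ, if_true] at h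
      exact h.symm
    have hCcol : ∀ s p, C s (Sum.inr p)
        = (1 : Matrix (Fin (m + 1) ⊕ Fin k) (Fin (m + 1) ⊕ Fin k) ℝ) s (Sum.inr p) := by
      intro s p
      rw [hCdef, ← Matrix.nonsing_inv_mul M' hU]
      rw [Matrix.mul_apply, Matrix.mul_apply]
      rfl
    have hblocks : C = Matrix.fromBlocks C.toBlocks₁₁ 0 C.toBlocks₂₁ 1 := by
      ext r s
      cases r with
      | inl j =>
        cases s with
        | inl j'' => rfl
        | inr p =>
          have h := hCcol (Sum.inl j) p
          rw [Matrix.one_apply_ne (by simp)] at h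
          simp [h]
      | inr q =>
        cases s with
        | inl j'' => rfl
        | inr p =>
          have h := hCcol (Sum.inr q) p
          rw [h]
          by_cases hqp : q = p
          · subst hqp; simp
          · rw [Matrix.one_apply_ne (by simp [hqp])]
            simp [Matrix.one_apply_ne, hqp]
    have hdetC : C.det = C.toBlocks₁₁.det := by
      conv_lhs => rw [hblocks]
      rw [Matrix.det_fromBlocks_zero₁₂, Matrix.det_one, mul_one]
    have hB11 : C.toBlocks₁₁ = Matrix.of (fun j j'' => (r' j)⁻¹ * a j j'') := by
      ext j j''
      have h := hCtop j (Sum.inl j'')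
      simp only [Sum.elim_inl] at h
      show C (Sum.inl j) (Sum.inl j'') = (r' j)⁻¹ * a j j''
      rw [← h, ← mul_assoc, inv_mul_cancel₀ (hr'pos j).ne', one_mul]
    have habs : |C.det| ≤ 1 := by
      rw [hdetC, hB11]
      rw [show (Matrix.of (fun j j'' => (r' j)⁻¹ * a j j''))
          = Matrix.of (fun j j'' => (fun i => (r' i)⁻¹) j * a j j'') from rfl]
      rw [Matrix.det_mul_column (fun i => (r' i)⁻¹) a]
      rw [abs_mul]
      have h1 : |∏ i, (r' i)⁻¹| = ∏ i, (r' i)⁻¹ :=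
        abs_of_nonneg (Finset.prod_nonneg fun i _ => (inv_nonneg.mpr (hr'pos i).le))
      rw [h1]
      have h2 : |a.det| ≤ ∏ i, r' i := by
        calc |a.det| ≤ ∏ i, ∑ j, a i j := abs_det_le_prod_row_sums a ha_nonneg
          _ = ∏ i, r' i := Finset.prod_congr rfl fun i _ => ha_rowsum i
      calc (∏ i, (r' i)⁻¹) * |a.det| ≤ (∏ i, (r' i)⁻¹) * ∏ i, r' i := by
            refine mul_le_mul_of_nonneg_left h2 ?_
            exact Finset.prod_nonneg fun i _ => (inv_nonneg.mpr (hr'pos i).le)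
        _ = 1 := by
            rw [← Finset.prod_mul_distrib]
            refine Finset.prod_eq_one fun i _ => ?_
            exact inv_mul_cancel₀ (hr'pos i).ne'
    calc |M.det| = |M'.det| * |C.det| := by rw [hMC, Matrix.det_mul, abs_mul]
      _ ≤ |M'.det| * 1 := mul_le_mul_of_nonneg_left habs (abs_nonneg _)
      _ = |M'.det| := mul_one _
end

section
/- Let V be a finite set partitioned into m+1 nonempty pairwise disjoint sets V_0, …, V_m. For ρ = (ρ_0, …, ρ_m) with all ρ_j > 0, let p(ρ) be the probability that t_0 ≤ t_1 ≤ ⋯ ≤ t_m, where t_0, …, t_m are independent random variables and t_j is Gamma-distributed with shape |V_j| and rate ρ_j. Let σ be a permutation of {0, …, m}, and consider the iterated limit L_σ = lim_{ρ_{σ(1)}→0⁺} ( ⋯ ( lim_{ρ_{σ(m)}→0⁺} p(ρ) ) ⋯ ), where the innermost limit is in the variable ρ_{σ(m)} with all other coordinates fixed and positive, each successive limit is asserted to exist, and the coordinate ρ_{σ(0)} is never sent to 0. Then L_σ = 1 if σ is the identity permutation, and L_σ = 0 otherwise (for every choice of the remaining positive variable). -/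
/-!
As `ρ_k → 0⁺` the `k`-th Gamma variable escapes to infinity in probability (its distribution
function at a fixed point is `O(ρ_k ^ a)`), so any event forcing `t_k ≤ t_l` for some `l ≠ k`
becomes negligible. Let `P_n(ρ)` be the probability that `t_0 ≤ ⋯ ≤ t_n`. Sending
`ρ_{n+1} → 0⁺` turns `P_{n+1}` into `P_n`, since the extra constraint `t_n ≤ t_{n+1}` becomes
almost sure and `P_n` does not involve `ρ_{n+1}`; sending `ρ_k → 0⁺` with `k < n` kills `P_n`,
since it requires `t_k ≤ t_{k+1}`. Hence the tower is `L_n = P_n` while `σ` fixes every index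
above `n`, and `L_n = 0` from the first stage where it does not; at the end `P_0 = 1`, and `σ`
fixes every index above `0` exactly when `σ = 1`.
-/

open Finset Filter MeasureTheory ProbabilityTheory Set Function
open scoped ENNReal Topology

lemma gammaMeasure_Iic_le {a r M : ℝ} (ha : 1 ≤ a) (hr : 0 ≤ r) (hM : 0 ≤ M) :
    gammaMeasure a r (Iic M) ≤ ENNReal.ofReal (r ^ a / Real.Gamma a * M ^ (a - 1) * M) := by
  have hΓ : 0 < Real.Gamma a := Real.Gamma_pos_of_pos (by linarith)
  have hpdf : ∀ x ∈ Icc 0 M,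
      gammaPDF a r x ≤ ENNReal.ofReal (r ^ a / Real.Gamma a * M ^ (a - 1)) := by
    intro x hx
    rw [gammaPDF_of_nonneg hx.1]
    refine ENNReal.ofReal_le_ofReal ?_
    calc r ^ a / Real.Gamma a * x ^ (a - 1) * Real.exp (-(r * x))
        ≤ r ^ a / Real.Gamma a * x ^ (a - 1) := by
          refine mul_le_of_le_one_right ?_ ?_
          · exact mul_nonneg (div_nonneg (Real.rpow_nonneg hr a) hΓ.le) (Real.rpow_nonneg hx.1 _)
          · exact Real.exp_le_one_iff.2 (by nlinarith [hx.1])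
      _ ≤ r ^ a / Real.Gamma a * M ^ (a - 1) := by
          gcongr
          · exact hx.1
          · linarith [hx.2]
  rw [gammaMeasure, withDensity_apply _ measurableSet_Iic,
    lintegral_Iic_eq_lintegral_Iio_add_Icc _ hM, lintegral_gammaPDF_of_nonpos le_rfl, zero_add]
  calc ∫⁻ x in Icc 0 M, gammaPDF a r x
      ≤ ∫⁻ _ in Icc 0 M, ENNReal.ofReal (r ^ a / Real.Gamma a * M ^ (a - 1)) :=
        setLIntegral_mono measurable_const hpdf
    _ = _ := by
        rw [setLIntegral_const, Real.volume_Icc, sub_zero, ← ENNReal.ofReal_mul (by positivity)]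

lemma tendsto_gammaMeasure_Iic_zero {a : ℝ} (ha : 1 ≤ a) (M : ℝ) :
    Tendsto (fun r => gammaMeasure a r (Iic M)) (𝓝[>] 0) (𝓝 0) := by
  set N := max M 0
  have hbound : Tendsto (fun r : ℝ => ENNReal.ofReal (r ^ a / Real.Gamma a * N ^ (a - 1) * N))
      (𝓝[>] 0) (𝓝 0) := by
    have hpow : Tendsto (fun r : ℝ => r ^ a) (𝓝[>] 0) (𝓝 0) := by
      simpa [Real.zero_rpow (by linarith : a ≠ 0)] using
        (Real.continuousAt_rpow_const 0 a (Or.inr (by linarith))).tendsto.mono_left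
          nhdsWithin_le_nhds
    simpa using ENNReal.tendsto_ofReal (((hpow.div_const _).mul_const _).mul_const _)
  refine tendsto_of_tendsto_of_tendsto_of_le_of_le' tendsto_const_nhds hbound
    (Eventually.of_forall fun _ => zero_le) ?_
  filter_upwards [self_mem_nhdsWithin] with r hr
  exact (measure_mono (Set.Iic_subset_Iic.2 (le_max_left M 0))).trans
    (gammaMeasure_Iic_le ha (le_of_lt hr) (le_max_right M 0))

lemma tendsto_measure_Ioi_atTop_zero (ν : Measure ℝ) [IsFiniteMeasure ν] :
    Tendsto (fun M => ν (Ioi M)) atTop (𝓝 0) := by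
  have hempty : ⋂ M : ℝ, Ioi M = ∅ := by
    ext x
    simpa using ⟨x, le_rfl⟩
  simpa [comp_def, hempty] using tendsto_measure_iInter_atTop
    (fun M => measurableSet_Ioi.nullMeasurableSet) (fun _ _ h => Ioi_subset_Ioi h)
    ⟨0, measure_ne_top ν _⟩

lemma tendsto_measure_pi_setOf_le_zero {ι α : Type*} [Fintype ι] {f : Filter α}
    {μ : α → ι → Measure ℝ} {ν : Measure ℝ} [IsFiniteMeasure ν] {k l : ι}
    (hprob : ∀ᶠ t in f, ∀ i, IsProbabilityMeasure (μ t i))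
    (hk : ∀ M, Tendsto (fun t => μ t k (Iic M)) f (𝓝 0)) (hl : ∀ t, μ t l = ν) :
    Tendsto (fun t => Measure.pi (μ t) {x | x k ≤ x l}) f (𝓝 0) := by
  rw [ENNReal.tendsto_nhds_zero]
  intro ε hε
  have hε2 : 0 < ε / 2 := ENNReal.half_pos hε.ne'
  obtain ⟨M, hM⟩ := ((tendsto_measure_Ioi_atTop_zero ν).eventually_lt_const hε2).exists
  filter_upwards [hprob, ENNReal.tendsto_nhds_zero.1 (hk M) _ hε2] with t ht hkt
  have hsplit : {x : ι → ℝ | x k ≤ x l} ⊆ eval k ⁻¹' Iic M ∪ eval l ⁻¹' Ioi M := by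
    intro x hx
    by_cases hxk : x k ≤ M
    · exact Or.inl hxk
    · exact Or.inr (lt_of_lt_of_le (not_le.1 hxk) hx)
  calc Measure.pi (μ t) {x | x k ≤ x l}
      ≤ Measure.pi (μ t) (eval k ⁻¹' Iic M) + Measure.pi (μ t) (eval l ⁻¹' Ioi M) :=
        (measure_mono hsplit).trans (measure_union_le _ _)
    _ = μ t k (Iic M) + ν (Ioi M) := by
        rw [(measurePreserving_eval _ k).measure_preimage measurableSet_Iic.nullMeasurableSet,
          (measurePreserving_eval _ l).measure_preimage measurableSet_Ioi.nullMeasurableSet, hl]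
    _ ≤ ε / 2 + ε / 2 := add_le_add hkt hM.le
    _ = ε := ENNReal.add_halves ε

lemma measure_pi_setOf_monotoneOn_congr {ι : Type*} [Fintype ι] [Preorder ι]
    {μ ν : ι → Measure ℝ} [∀ i, IsProbabilityMeasure (μ i)] [∀ i, IsProbabilityMeasure (ν i)]
    {s : Set ι} (h : ∀ i ∈ s, μ i = ν i) :
    Measure.pi μ {x | MonotoneOn x s} = Measure.pi ν {x | MonotoneOn x s} := by
  classical
  have hrestrict : ∀ (κ : ι → Measure ℝ) [∀ i, IsProbabilityMeasure (κ i)],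
      Measure.pi κ {x | MonotoneOn x s} = Measure.pi (fun i : s => κ i) {y | Monotone y} := by
    intro κ _
    have hpres : MeasurePreserving (fun x (i : s) => x i) (Measure.pi κ)
        (Measure.pi fun i : s => κ i) :=
      measurePreserving_fst.comp (measurePreserving_piEquivPiSubtypeProd κ (· ∈ s))
    rw [← hpres.measure_preimage isClosed_monotone.measurableSet.nullMeasurableSet]
    congr 1 with x
    exact monotoneOn_iff_monotone
  rw [hrestrict μ, hrestrict ν, funext fun i : s => h i i.2]

lemma monotoneOn_succ_of_le {m n : ℕ} {x : Fin (m + 1) → ℝ} {k l : Fin (m + 1)}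
    (hl : (l : ℕ) = n) (hk : (k : ℕ) = n + 1) (hx : MonotoneOn x {i | (i : ℕ) ≤ n})
    (hlk : x l ≤ x k) : MonotoneOn x {i | (i : ℕ) ≤ n + 1} := by
  intro i hi j hj hij
  have hij' : (i : ℕ) ≤ j := hij
  by_cases hjn : (j : ℕ) ≤ n
  · exact hx (show (i : ℕ) ≤ n by omega) hjn hij
  obtain rfl : j = k := Fin.ext (by simp only [Set.mem_ofPred_eq] at hj; omega)
  by_cases hin : (i : ℕ) ≤ n
  · exact (hx hin hl.le (show (i : ℕ) ≤ l by omega)).trans hlk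
  · rw [show i = j from Fin.ext (by omega)]

section EscapingCoordinate

variable {m : ℕ} {α : Type*} {f : Filter α} {μ : α → Fin (m + 1) → Measure ℝ}
  {μ₀ : Fin (m + 1) → Measure ℝ} {k : Fin (m + 1)} {n : ℕ}

lemma tendsto_measure_pi_monotoneOn_zero
    (hprob : ∀ᶠ t in f, ∀ i, IsProbabilityMeasure (μ t i)) [∀ i, IsFiniteMeasure (μ₀ i)]
    (hfix : ∀ t, ∀ i ≠ k, μ t i = μ₀ i) (hk : ∀ M, Tendsto (fun t => μ t k (Iic M)) f (𝓝 0))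
    (hkn : (k : ℕ) < n) (hnm : n ≤ m) :
    Tendsto (fun t => Measure.pi (μ t) {x | MonotoneOn x {i | (i : ℕ) ≤ n}}) f (𝓝 0) := by
  set l : Fin (m + 1) := ⟨k + 1, by omega⟩
  have hlk : l ≠ k := fun h => by simp [l, Fin.ext_iff] at h
  refine tendsto_of_tendsto_of_tendsto_of_le_of_le tendsto_const_nhds
    (tendsto_measure_pi_setOf_le_zero hprob hk fun t => hfix t l hlk)
    (fun _ => zero_le) fun t => measure_mono fun x hx => ?_
  exact hx (show (k : ℕ) ≤ n by omega) (show (l : ℕ) ≤ n by simp [l]; omega)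
    (show (k : ℕ) ≤ l by simp [l])

lemma tendsto_measure_pi_monotoneOn_succ
    (hprob : ∀ᶠ t in f, ∀ i, IsProbabilityMeasure (μ t i)) [∀ i, IsProbabilityMeasure (μ₀ i)]
    (hfix : ∀ t, ∀ i ≠ k, μ t i = μ₀ i) (hk : ∀ M, Tendsto (fun t => μ t k (Iic M)) f (𝓝 0))
    (hkn : (k : ℕ) = n + 1) :
    Tendsto (fun t => Measure.pi (μ t) {x | MonotoneOn x {i | (i : ℕ) ≤ n + 1}}) f
      (𝓝 (Measure.pi μ₀ {x | MonotoneOn x {i | (i : ℕ) ≤ n}})) := by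
  set c := Measure.pi μ₀ {x | MonotoneOn x {i | (i : ℕ) ≤ n}}
  set l : Fin (m + 1) := ⟨n, by omega⟩
  have hlk : l ≠ k := fun h => by simp [l, Fin.ext_iff] at h; omega
  have hD := tendsto_measure_pi_setOf_le_zero hprob hk fun t => hfix t l hlk
  have hc : ∀ᶠ t in f, Measure.pi (μ t) {x | MonotoneOn x {i | (i : ℕ) ≤ n}} = c := by
    filter_upwards [hprob] with t ht
    exact measure_pi_setOf_monotoneOn_congr fun i hi => hfix t i (by rintro rfl; simp_all)
  have hlower : Tendsto (fun t => c - Measure.pi (μ t) {x | x k ≤ x l}) f (𝓝 c) := by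
    simpa using ENNReal.Tendsto.sub tendsto_const_nhds hD (Or.inl (measure_ne_top _ _))
  refine tendsto_of_tendsto_of_tendsto_of_le_of_le' hlower tendsto_const_nhds ?_ ?_
  · filter_upwards [hc] with t ht
    rw [tsub_le_iff_right, ← ht]
    refine (measure_mono fun x hx => ?_).trans (measure_union_le _ _)
    by_cases hxlk : x l ≤ x k
    · exact Or.inl (monotoneOn_succ_of_le rfl hkn hx hxlk)
    · exact Or.inr (not_le.1 hxlk).le
  · filter_upwards [hc] with t ht
    rw [← ht]
    exact measure_mono fun x hx => hx.mono fun i (hi : (i : ℕ) ≤ n) => show (i : ℕ) ≤ n + 1 by omega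

end EscapingCoordinate

noncomputable abbrev gammaPi {ι : Type*} [Fintype ι] (a ρ : ι → ℝ) : Measure (ι → ℝ) :=
  Measure.pi fun i => gammaMeasure (a i) (ρ i)

section GammaRates

variable {m n : ℕ} {a ρ : Fin (m + 1) → ℝ} {k : Fin (m + 1)}

lemma isProbabilityMeasure_gammaMeasure_of_one_le (ha : ∀ i, 1 ≤ a i) (hρ : ∀ i, 0 < ρ i)
    (i : Fin (m + 1)) : IsProbabilityMeasure (gammaMeasure (a i) (ρ i)) :=
  isProbabilityMeasure_gammaMeasure (by linarith [ha i]) (hρ i)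

lemma eventually_isProbabilityMeasure_gammaMeasure_update (ha : ∀ i, 1 ≤ a i)
    (hρ : ∀ i, 0 < ρ i) (k : Fin (m + 1)) :
    ∀ᶠ t in 𝓝[>] 0, ∀ i, IsProbabilityMeasure (gammaMeasure (a i) (update ρ k t i)) := by
  filter_upwards [self_mem_nhdsWithin] with t (ht : 0 < t)
  exact isProbabilityMeasure_gammaMeasure_of_one_le ha
    ((forall_update_iff ρ fun _ r => 0 < r).2 ⟨ht, fun i _ => hρ i⟩)

lemma tendsto_gammaMeasure_update_Iic_zero (ha : ∀ i, 1 ≤ a i) (M : ℝ) :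
    Tendsto (fun t => gammaMeasure (a k) (update ρ k t k) (Iic M)) (𝓝[>] 0) (𝓝 0) := by
  simpa only [update_self] using tendsto_gammaMeasure_Iic_zero (ha k) M

lemma tendsto_gammaPi_update_monotoneOn_succ (ha : ∀ i, 1 ≤ a i) (hρ : ∀ i, 0 < ρ i)
    (hkn : (k : ℕ) = n + 1) :
    Tendsto (fun t => (gammaPi a (update ρ k t) {x | MonotoneOn x {i | (i : ℕ) ≤ n + 1}}).toReal)
      (𝓝[>] 0) (𝓝 (gammaPi a ρ {x | MonotoneOn x {i | (i : ℕ) ≤ n}}).toReal) := by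
  have := isProbabilityMeasure_gammaMeasure_of_one_le ha hρ
  refine (ENNReal.tendsto_toReal (measure_ne_top _ _)).comp ?_
  exact tendsto_measure_pi_monotoneOn_succ
    (eventually_isProbabilityMeasure_gammaMeasure_update ha hρ k)
    (fun t i hi => by rw [update_of_ne hi]) (tendsto_gammaMeasure_update_Iic_zero ha) hkn

lemma tendsto_gammaPi_update_monotoneOn_zero (ha : ∀ i, 1 ≤ a i) (hρ : ∀ i, 0 < ρ i)
    (hkn : (k : ℕ) < n) (hnm : n ≤ m) :
    Tendsto (fun t => (gammaPi a (update ρ k t) {x | MonotoneOn x {i | (i : ℕ) ≤ n}}).toReal)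
      (𝓝[>] 0) (𝓝 0) := by
  have := isProbabilityMeasure_gammaMeasure_of_one_le ha hρ
  simpa only [comp_def, ENNReal.toReal_zero] using
    (ENNReal.tendsto_toReal ENNReal.zero_ne_top).comp
      (tendsto_measure_pi_monotoneOn_zero (μ₀ := fun i => gammaMeasure (a i) (ρ i))
        (eventually_isProbabilityMeasure_gammaMeasure_update ha hρ k)
        (fun t i hi => by rw [update_of_ne hi]) (tendsto_gammaMeasure_update_Iic_zero ha) hkn hnm)

end GammaRates

def FixesAbove {m : ℕ} (σ : Equiv.Perm (Fin (m + 1))) (n : ℕ) : Prop :=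
  ∀ i : Fin (m + 1), n < i → σ i = i

section FixesAbove

variable {m n : ℕ} {σ : Equiv.Perm (Fin (m + 1))}

lemma fixesAbove_self : FixesAbove σ m := fun i hi => absurd i.isLt (by omega)

lemma FixesAbove.mono {n' : ℕ} (h : FixesAbove σ n) (hn : n ≤ n') : FixesAbove σ n' :=
  fun i hi => h i (by omega)

lemma FixesAbove.val_apply_le (h : FixesAbove σ n) {i : Fin (m + 1)} (hi : (i : ℕ) ≤ n) :
    (σ i : ℕ) ≤ n := by
  by_contra hlt
  have hfix : σ i = i := σ.injective (h (σ i) (by omega))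
  rw [hfix] at hlt
  exact hlt hi

lemma fixesAbove_iff_succ {k : Fin (m + 1)} (hk : (k : ℕ) = n + 1) :
    FixesAbove σ n ↔ FixesAbove σ (n + 1) ∧ σ k = k := by
  refine ⟨fun h => ⟨h.mono n.le_succ, h k (by omega)⟩, fun ⟨h, hk'⟩ i hi => ?_⟩
  rcases Nat.lt_or_ge (n + 1) i with hlt | hle
  · exact h i hlt
  · rwa [show i = k from Fin.ext (by omega)]

lemma fixesAbove_zero_iff : FixesAbove σ 0 ↔ σ = 1 := by
  refine ⟨fun h => Equiv.ext fun i => ?_, by rintro rfl i _; rfl⟩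
  rw [Equiv.Perm.one_apply]
  rcases Nat.eq_zero_or_pos i with hi | hi
  · exact Fin.ext (by have := h.val_apply_le hi.le; omega)
  · exact h i hi

end FixesAbove

/-- Let `V` be partitioned into `m+1` nonempty parts (surjective
`idx : V → Fin (m+1)`), and let `p(ρ)` be the probability that `t_0 ≤ ⋯ ≤ t_m` for
independent `t_j ~ Gamma(|V_j|, ρ_j)`.  For a permutation `σ` of `{0,…,m}`, the iterated
limit `L_σ = lim_{ρ_{σ(1)}→0⁺}(⋯(lim_{ρ_{σ(m)}→0⁺} p(ρ))⋯)` exists at each stage and its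
value is `1` if `σ = id` and `0` otherwise, for every choice of the remaining positive
variable: there is a tower `L` with `L m = p`, each `L (j-1)` the one-sided limit of `L j`
in the variable `ρ_{σ(j)}` at every positive point, and `L 0 = (if σ = 1 then 1 else 0)`
on the positive orthant. -/
theorem statement8 {V : Type*} [Fintype V] (m : ℕ)
    (idx : V → Fin (m + 1)) (hidx : Function.Surjective idx)
    (σ : Equiv.Perm (Fin (m + 1)))
    (p : (Fin (m + 1) → ℝ) → ℝ)
    (hp : ∀ ρ : Fin (m + 1) → ℝ,
      p ρ = ((Measure.pi fun j =>
          gammaMeasure ((Finset.univ.filter (fun i => idx i = j)).card : ℝ) (ρ j))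
            {t : Fin (m + 1) → ℝ | Monotone t}).toReal) :
    ∃ L : ℕ → (Fin (m + 1) → ℝ) → ℝ,
      L m = p ∧
      (∀ (j : ℕ) (hj1 : 1 ≤ j) (hj2 : j ≤ m), ∀ ρ : Fin (m + 1) → ℝ,
        (∀ j', 0 < ρ j') →
        Tendsto (fun t : ℝ => L j (Function.update ρ (σ ⟨j, by omega⟩) t))
          (nhdsWithin 0 (Set.Ioi 0)) (nhds (L (j - 1) ρ))) ∧
      (∀ ρ : Fin (m + 1) → ℝ, (∀ j', 0 < ρ j') →
        L 0 ρ = if σ = 1 then 1 else 0) := by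
  classical
  set a : Fin (m + 1) → ℝ := fun j => ((univ.filter fun i => idx i = j).card : ℝ)
  have ha : ∀ j, 1 ≤ a j := fun j => by
    obtain ⟨v, rfl⟩ := hidx j
    exact Nat.one_le_cast.2 (card_pos.2 ⟨v, mem_filter.2 ⟨mem_univ v, rfl⟩⟩)
  refine ⟨fun n ρ => if FixesAbove σ n then
    (gammaPi a ρ {x | MonotoneOn x {i | (i : ℕ) ≤ n}}).toReal else 0, ?_, ?_, ?_⟩
  · funext ρ
    simp [fixesAbove_self, hp, gammaPi, a, Fin.is_le]
  · intro j hj1 hj2 ρ hρ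
    obtain ⟨n, rfl⟩ : ∃ n, j = n + 1 := ⟨j - 1, by omega⟩
    set k₀ : Fin (m + 1) := ⟨n + 1, by omega⟩
    simp only [Nat.add_sub_cancel]
    by_cases hG : FixesAbove σ (n + 1)
    · by_cases hk : σ k₀ = k₀
      · simp only [if_pos hG, if_pos ((fixesAbove_iff_succ rfl).2 ⟨hG, hk⟩)]
        exact tendsto_gammaPi_update_monotoneOn_succ ha hρ (by rw [hk])
      · simp only [if_pos hG, if_neg fun h => hk ((fixesAbove_iff_succ rfl).1 h).2]
        refine tendsto_gammaPi_update_monotoneOn_zero ha hρ ?_ hj2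
        exact lt_of_le_of_ne (hG.val_apply_le le_rfl) fun h => hk (Fin.ext h)
    · simp only [if_neg hG, if_neg fun h : FixesAbove σ n => hG (h.mono n.le_succ)]
      exact tendsto_const_nhds
  · intro ρ hρ
    have := isProbabilityMeasure_gammaMeasure_of_one_le ha hρ
    by_cases hσ : σ = 1 <;> simp [hσ, fixesAbove_zero_iff]
end

section
/- Let V be a finite set, let W be a nonempty proper subset of V, let q = |V ∖ W|, and let λ ∈ ℝ^V have all coordinates strictly positive. Let t, (s_i)_{i ∈ V∖W} be independent random variables, where t is Gamma-distributed with shape |W| and rate ∑_{i∈W} λ_i, and each s_i is Exponentially distributed with rate λ_i. Then ∑_σ P(t ≤ s_{σ(1)} ≤ s_{σ(2)} ≤ ⋯ ≤ s_{σ(q)}) = (∑_{i∈W} λ_i / ∑_{i∈V} λ_i)^{|W|}, where the sum runs over all bijections σ: {1, …, q} → V ∖ W. -/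
/-!
Almost surely the clocks `s_i` are pairwise distinct, so exactly one bijection `σ` lists them in
increasing order: the events summed over are a.e. disjoint and their union is a.e. the event
`t ≤ min_i s_i`. Given `t ≥ 0` this event has probability `exp (-(∑_{i ∉ W} λ_i) t)`, and the
Laplace transform of `Gamma(a, ρ)` at `c` is `(ρ / (ρ + c)) ^ a`.
-/

open MeasureTheory ProbabilityTheory Finset Set Function Real

namespace Fin

lemma monotone_cons_iff {α : Type*} [Preorder α] {n : ℕ} {x : α} {f : Fin n → α} :
    Monotone (Fin.cons x f : Fin (n + 1) → α) ↔ (∀ i, x ≤ f i) ∧ Monotone f := by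
  refine ⟨fun h => ⟨fun i => by simpa using h (Fin.zero_le i.succ),
    fun i j hij => by simpa using h (Fin.succ_le_succ_iff.mpr hij)⟩, fun ⟨hx, hf⟩ => ?_⟩
  intro a b hab
  induction b using Fin.cases with
  | zero => rw [Fin.le_zero_iff.mp hab]
  | succ j =>
    induction a using Fin.cases with
    | zero => simpa using hx j
    | succ i => simpa using hf (Fin.succ_le_succ_iff.mp hab)

end Fin

theorem existsUnique_equiv_monotone_comp {ι α : Type*} [Fintype ι] [LinearOrder α] {n : ℕ}
    (hn : Fintype.card ι = n) {x : ι → α} (hx : Injective x) :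
    ∃! σ : Fin n ≃ ι, Monotone (x ∘ σ) := by
  let e : ι ≃ Fin n := Fintype.equivFinOfCardEq hn
  let σ₀ : Fin n ≃ ι := (Tuple.sort (x ∘ e.symm)).trans e.symm
  have hσ₀ : Monotone (x ∘ σ₀) := Tuple.monotone_sort (x ∘ e.symm)
  refine ⟨σ₀, hσ₀, fun σ hσ => ?_⟩
  have hrange : ∀ τ : Fin n ≃ ι, range (x ∘ τ) = range x := fun τ => τ.surjective.range_comp x
  have hcomp := (hσ.strictMono_of_injective (hx.comp σ.injective)).range_inj
    (hσ₀.strictMono_of_injective (hx.comp σ₀.injective))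
  exact Equiv.ext fun j => hx (congrFun (hcomp.mp ((hrange σ).trans (hrange σ₀).symm)) j)

namespace MeasureTheory

lemma measurableSet_setOf_monotone {ι α : Type*} [Countable ι] [Preorder ι] [LinearOrder α]
    [TopologicalSpace α] [OrderClosedTopology α] [SecondCountableTopology α] [MeasurableSpace α]
    [OpensMeasurableSpace α] : MeasurableSet {x : ι → α | Monotone x} := by
  simp only [Monotone, ofPred_forall]
  exact .iInter fun i => .iInter fun j => .iInter fun _ =>
    measurableSet_le (measurable_pi_apply i) (measurable_pi_apply j)

lemma measurableSet_setOf_fst_le_snd_apply {ι α : Type*} [Countable ι] [LinearOrder α]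
    [TopologicalSpace α] [OrderClosedTopology α] [SecondCountableTopology α] [MeasurableSpace α]
    [OpensMeasurableSpace α] : MeasurableSet {p : α × (ι → α) | ∀ i, p.1 ≤ p.2 i} := by
  simp only [ofPred_forall]
  exact .iInter fun i =>
    measurableSet_le measurable_fst ((measurable_pi_apply i).comp measurable_snd)

lemma Measure.pi_setOf_apply_eq_apply_eq_zero {ι α : Type*} [Fintype ι] [MeasurableSpace α]
    [MeasurableEq α] (μ : ι → Measure α) [∀ i, IsProbabilityMeasure (μ i)]
    [∀ i, NullSingletonClass (μ i)] {i j : ι} (hij : i ≠ j) :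
    Measure.pi μ {x | x i = x j} = 0 := by
  have hind : IndepFun (fun x : ι → α => x i) (fun x => x j) (Measure.pi μ) :=
    (iIndepFun_pi (X := fun _ => id) fun _ => aemeasurable_id).indepFun hij
  rw [indepFun_iff_map_prod_eq_prod_map_map (measurable_pi_apply i).aemeasurable
    (measurable_pi_apply j).aemeasurable, (measurePreserving_eval μ i).map_eq,
    (measurePreserving_eval μ j).map_eq] at hind
  have hpre : {x : ι → α | x i = x j} = (fun x => (x i, x j)) ⁻¹' diagonal α := rfl
  have hsection : ∀ a : α, Prod.mk a ⁻¹' diagonal α = {a} := fun a => by ext; simp [eq_comm]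
  rw [hpre, ← Measure.map_apply (by fun_prop) measurableSet_diagonal, hind,
    Measure.prod_apply measurableSet_diagonal]
  simp [hsection]

lemma Measure.ae_injective_pi {ι α : Type*} [Fintype ι] [MeasurableSpace α] [MeasurableEq α]
    (μ : ι → Measure α) [∀ i, IsProbabilityMeasure (μ i)] [∀ i, NullSingletonClass (μ i)] :
    ∀ᵐ x ∂Measure.pi μ, Injective x := by
  have hdistinct : ∀ᵐ x ∂Measure.pi μ, ∀ i j, i ≠ j → x i ≠ x j := by
    simp only [ae_all_iff]
    intro i j hij
    exact measure_mono_null (fun x hx => not_not.mp hx)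
      (Measure.pi_setOf_apply_eq_apply_eq_zero μ hij)
  filter_upwards [hdistinct] with x hx i j hxij
  by_contra hij
  exact hx i j hij hxij

theorem sum_measure_setOf_monotone_comp {Ω ι α : Type*} [MeasurableSpace Ω] [Fintype ι]
    [DecidableEq ι] [LinearOrder α] {n : ℕ} (hn : Fintype.card ι = n) (μ : Measure Ω)
    {X : Ω → ι → α} (hX : ∀ᵐ ω ∂μ, Injective (X ω))
    (hmeas : ∀ σ : Fin n ≃ ι, NullMeasurableSet {ω | Monotone (X ω ∘ σ)} μ) :
    ∑ σ : Fin n ≃ ι, μ {ω | Monotone (X ω ∘ σ)} = μ univ := by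
  have hcover : (⋃ σ : Fin n ≃ ι, {ω | Monotone (X ω ∘ σ)}) =ᵐ[μ] univ := by
    refine Filter.eventuallyEq_univ.mpr ?_
    filter_upwards [hX] with ω hω
    obtain ⟨σ, hσ, -⟩ := existsUnique_equiv_monotone_comp hn hω
    exact mem_iUnion.mpr ⟨σ, hσ⟩
  have hdisj : Pairwise (AEDisjoint μ on fun σ : Fin n ≃ ι => {ω | Monotone (X ω ∘ σ)}) := by
    intro σ τ hστ
    refine measure_mono_null (t := {ω | ¬Injective (X ω)}) ?_ (ae_iff.mp hX)
    rintro ω ⟨hσ, hτ⟩ hinj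
    exact hστ ((existsUnique_equiv_monotone_comp hn hinj).unique hσ hτ)
  rw [← measure_congr hcover, measure_iUnion₀ hdisj hmeas, tsum_fintype]

theorem sum_measure_setOf_monotone_cons {ι α : Type*} [Fintype ι] [DecidableEq ι]
    [LinearOrder α] [TopologicalSpace α] [OrderClosedTopology α] [SecondCountableTopology α]
    [MeasurableSpace α] [OpensMeasurableSpace α] {n : ℕ} (hn : Fintype.card ι = n)
    (μ : Measure (α × (ι → α))) (hμ : ∀ᵐ p ∂μ, Injective p.2) :
    ∑ σ : Fin n ≃ ι, μ {p | Monotone (Fin.cons p.1 (fun j => p.2 (σ j)) : Fin (n + 1) → α)} =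
      μ {p | ∀ i, p.1 ≤ p.2 i} := by
  have hT := measurableSet_setOf_fst_le_snd_apply (ι := ι) (α := α)
  have hsplit : ∀ σ : Fin n ≃ ι,
      {p : α × (ι → α) | Monotone (Fin.cons p.1 (fun j => p.2 (σ j)) : Fin (n + 1) → α)} =
        {p | Monotone (p.2 ∘ σ)} ∩ {p | ∀ i, p.1 ≤ p.2 i} := fun σ => by
    ext p
    simp only [mem_ofPred_eq, mem_inter_iff, Fin.monotone_cons_iff]
    exact and_comm.trans (and_congr Iff.rfl (σ.forall_congr_right (q := fun i => p.1 ≤ p.2 i)))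
  simp_rw [hsplit, ← Measure.restrict_apply' hT]
  exact (sum_measure_setOf_monotone_comp hn _ (ae_restrict_of_ae hμ) fun σ =>
    (measurableSet_setOf_monotone.preimage (by fun_prop)).nullMeasurableSet).trans
    (Measure.restrict_apply_univ _)

end MeasureTheory

namespace ProbabilityTheory

instance (a r : ℝ) : NullSingletonClass (gammaMeasure a r) := by
  unfold gammaMeasure; infer_instance

lemma measurable_gammaPDF (a r : ℝ) : Measurable (gammaPDF a r) :=
  (measurable_gammaPDFReal a r).ennreal_ofReal

lemma ae_nonneg_gammaMeasure (a r : ℝ) : ∀ᵐ t ∂gammaMeasure a r, 0 ≤ t := by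
  simp only [ae_iff, not_le]
  change gammaMeasure a r (Iio 0) = 0
  rw [gammaMeasure, withDensity_apply _ measurableSet_Iio]
  exact lintegral_gammaPDF_of_nonpos le_rfl

lemma gammaMeasure_one_Ici {r t : ℝ} (hr : 0 < r) (ht : 0 ≤ t) :
    gammaMeasure 1 r (Ici t) = ENNReal.ofReal (exp (-(r * t))) := by
  have := isProbabilityMeasure_gammaMeasure zero_lt_one hr
  have hexp : exp (-(r * t)) ≤ 1 := exp_le_one_iff.mpr (neg_nonpos.mpr (mul_nonneg hr.le ht))
  rw [measure_congr Ioi_ae_eq_Ici.symm, ← compl_Iic, prob_compl_eq_one_sub measurableSet_Iic,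
    ← ofReal_cdf, show gammaMeasure 1 r = expMeasure r from rfl, cdf_expMeasure_eq hr,
    if_pos ht, ← ENNReal.ofReal_one, ← ENNReal.ofReal_sub _ (sub_nonneg.mpr hexp),
    sub_sub_cancel]

lemma pi_gammaMeasure_one_pi_Ici {ι : Type*} [Fintype ι] {r : ι → ℝ} (hr : ∀ i, 0 < r i)
    {t : ℝ} (ht : 0 ≤ t) :
    Measure.pi (fun i => gammaMeasure 1 (r i)) (Set.pi univ fun _ => Ici t) =
      ENNReal.ofReal (exp (-((∑ i, r i) * t))) := by
  have := fun i => isProbabilityMeasure_gammaMeasure zero_lt_one (hr i)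
  rw [Measure.pi_pi, Finset.prod_congr rfl fun i _ => gammaMeasure_one_Ici (hr i) ht,
    ← ENNReal.ofReal_prod_of_nonneg fun i _ => (exp_pos _).le, ← exp_sum, Finset.sum_mul,
    ← Finset.sum_neg_distrib]

lemma gammaPDF_mul_exp_neg_mul {a r c : ℝ} (hr : 0 < r) (hrc : 0 < r + c) (t : ℝ) :
    gammaPDF a r t * ENNReal.ofReal (exp (-(c * t))) =
      ENNReal.ofReal ((r / (r + c)) ^ a) * gammaPDF a (r + c) t := by
  rcases lt_or_ge t 0 with ht | ht
  · simp [gammaPDF_of_neg ht]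
  rw [gammaPDF_of_nonneg ht, gammaPDF_of_nonneg ht, ← ENNReal.ofReal_mul' (by positivity),
    ← ENNReal.ofReal_mul (by positivity), div_rpow hr.le hrc.le]
  congr 1
  have := (rpow_pos_of_pos hrc a).ne'
  rw [show -((r + c) * t) = -(r * t) + -(c * t) by ring, exp_add]
  field_simp

lemma lintegral_exp_neg_mul_gammaMeasure {a r c : ℝ} (ha : 0 < a) (hr : 0 < r)
    (hrc : 0 < r + c) :
    ∫⁻ t, ENNReal.ofReal (exp (-(c * t))) ∂gammaMeasure a r =
      ENNReal.ofReal ((r / (r + c)) ^ a) := by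
  rw [gammaMeasure, lintegral_withDensity_eq_lintegral_mul _ (measurable_gammaPDF a r)
    (by fun_prop)]
  simp only [Pi.mul_apply, gammaPDF_mul_exp_neg_mul hr hrc]
  rw [lintegral_const_mul _ (measurable_gammaPDF a _), lintegral_gammaPDF_eq_one ha hrc,
    mul_one]

lemma prod_gammaMeasure_pi_setOf_le {ι : Type*} [Fintype ι] {a ρ : ℝ} (ha : 0 < a)
    (hρ : 0 < ρ) {r : ι → ℝ} (hr : ∀ i, 0 < r i) :
    (gammaMeasure a ρ).prod (Measure.pi fun i => gammaMeasure 1 (r i))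
        {p | ∀ i, p.1 ≤ p.2 i} = ENNReal.ofReal ((ρ / (ρ + ∑ i, r i)) ^ a) := by
  have := isProbabilityMeasure_gammaMeasure ha hρ
  have := fun i => isProbabilityMeasure_gammaMeasure zero_lt_one (hr i)
  have hsection : ∀ t, Prod.mk t ⁻¹' {p : ℝ × (ι → ℝ) | ∀ i, p.1 ≤ p.2 i} =
      Set.pi univ fun _ => Ici t := fun t => by ext; simp [Pi.le_def]
  rw [Measure.prod_apply measurableSet_setOf_fst_le_snd_apply,
    ← lintegral_exp_neg_mul_gammaMeasure ha hρ
      (add_pos_of_pos_of_nonneg hρ (Finset.sum_nonneg fun i _ => (hr i).le))]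
  refine lintegral_congr_ae ?_
  filter_upwards [ae_nonneg_gammaMeasure a ρ] with t ht
  rw [hsection, pi_gammaMeasure_one_pi_Ici hr ht]

end ProbabilityTheory

theorem statement12_general {V : Type*} [Fintype V] [DecidableEq V]
    (W : Finset V) (hW : W.Nonempty)
    (l : V → ℝ) (hl : ∀ i, 0 < l i) :
    ∑ σ : Fin Wᶜ.card ≃ {i // i ∈ Wᶜ},
      ((Measure.prod
          (gammaMeasure (W.card : ℝ) (∑ i ∈ W, l i))
          (Measure.pi fun i : {i // i ∈ Wᶜ} => gammaMeasure 1 (l i.1)))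
        {p : ℝ × ({i // i ∈ Wᶜ} → ℝ) |
          Monotone (Fin.cons p.1 (fun j => p.2 (σ j)) : Fin (Wᶜ.card + 1) → ℝ)}).toReal
      = ((∑ i ∈ W, l i) / ∑ i, l i) ^ W.card := by
  have hρ : 0 < ∑ i ∈ W, l i := Finset.sum_pos (fun i _ => hl i) hW
  have hcard : (0 : ℝ) < W.card := by exact_mod_cast hW.card_pos
  have := isProbabilityMeasure_gammaMeasure hcard hρ
  have := fun i : {i // i ∈ Wᶜ} => isProbabilityMeasure_gammaMeasure zero_lt_one (hl i)
  rw [← ENNReal.toReal_sum fun _ _ => measure_ne_top _ _,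
    sum_measure_setOf_monotone_cons (Fintype.card_coe _) _
      (Measure.quasiMeasurePreserving_snd.ae (Measure.ae_injective_pi _)),
    prod_gammaMeasure_pi_setOf_le hcard hρ fun i : {i // i ∈ Wᶜ} => hl i, Finset.sum_coe_sort Wᶜ l,
    Finset.sum_add_sum_compl, rpow_natCast, ENNReal.toReal_ofReal
      (pow_nonneg (div_nonneg hρ.le (Finset.sum_nonneg fun i _ => (hl i).le)) _)]

/-- Let `W` be a nonempty proper subset of a finite set `V`,
`q = |V∖W|`, and `λ` strictly positive on `V`.  With `t ~ Gamma(|W|, ∑_{i∈W} λ_i)` and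
`s_i ~ Exponential(λ_i) = Gamma(1, λ_i)` (`i ∈ V∖W`) independent,
`∑_σ P(t ≤ s_{σ(1)} ≤ ⋯ ≤ s_{σ(q)}) = (∑_{i∈W} λ_i / ∑_{i∈V} λ_i)^{|W|}`, the sum
running over all bijections `σ : {1,…,q} → V∖W`. -/
theorem statement12 {V : Type*} [Fintype V] [DecidableEq V]
    (W : Finset V) (hW : W.Nonempty) (hWproper : W ≠ Finset.univ)
    (l : V → ℝ) (hl : ∀ i, 0 < l i) :
    ∑ σ : Fin Wᶜ.card ≃ {i // i ∈ Wᶜ},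
      ((Measure.prod
          (gammaMeasure (W.card : ℝ) (∑ i ∈ W, l i))
          (Measure.pi fun i : {i // i ∈ Wᶜ} => gammaMeasure 1 (l i.1)))
        {p : ℝ × ({i // i ∈ Wᶜ} → ℝ) |
          Monotone (Fin.cons p.1 (fun j => p.2 (σ j)) : Fin (Wᶜ.card + 1) → ℝ)}).toReal
      = ((∑ i ∈ W, l i) / ∑ i, l i) ^ W.card :=
  statement12_general W hW l hl
end

section
/- Let V be a finite nonempty set. Define the blow-up T̃ of the simplex on V as the set of families (λ^K)_{K}, indexed by the nonempty subsets K ⊆ V, with λ^K ∈ ℝ^K, λ^K_i ≥ 0 for all i ∈ K, satisfying: ∑_{i∈K} λ^K_i = 1 for every nonempty K ⊆ V, and λ^H_i = (∑_{i'∈K} λ^H_{i'}) · λ^K_i for all nonempty K ⊆ H ⊆ V and all i ∈ K. Then for every λ ∈ ℝ^V with λ_i > 0 for all i and ∑_{i∈V} λ_i = 1, there exists exactly one family (λ^K) ∈ T̃ with λ^V = λ, and it is given by λ^K_i = λ_i / ∑_{i'∈K} λ_{i'}. -/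
/-!
The constraints of `T̃` say that each `λ^K` is `λ^H` restricted to `K` and renormalised.
Over an interior point `λ` every restricted mass `ρ_K = ∑_{i∈K} λ_i` is positive, so taking
`H = V` forces `λ^K_i = λ_i / ρ_K`; conversely this family satisfies the constraints because
`(λ_i / ρ_H) / (ρ_K / ρ_H) = λ_i / ρ_K`.
-/

/-- The blow-up `T̃` of the simplex on a finite set `α`: families `(λ^K)_K` indexed by the
subsets `K ⊆ α` (the component at `K = ∅` carries no data), with `λ^K ∈ ℝ^K`
componentwise nonnegative, `∑_{i∈K} λ^K_i = 1` for every nonempty `K`, and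
`λ^H_i = (∑_{i'∈K} λ^H_{i'}) · λ^K_i` for all nonempty `K ⊆ H` and `i ∈ K`. -/
def blowUp (α : Type*) [Fintype α] [DecidableEq α] :
    Set ((K : Finset α) → ({i // i ∈ K} → ℝ)) :=
  {L | (∀ K : Finset α, K.Nonempty →
          (∀ i : {i // i ∈ K}, 0 ≤ L K i) ∧ ∑ i : {i // i ∈ K}, L K i = 1) ∧
       ∀ (K H : Finset α), K.Nonempty → ∀ (hKH : K ⊆ H) (i : α) (hi : i ∈ K),
         L H ⟨i, hKH hi⟩ =
           (∑ i' : {i' // i' ∈ K}, L H ⟨i'.1, hKH i'.2⟩) * L K ⟨i, hi⟩}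

section BlowUp

variable {α : Type*}

noncomputable def blowUpLift (l : α → ℝ) : (K : Finset α) → ({i // i ∈ K} → ℝ) :=
  fun K i => l i / ∑ i' ∈ K, l i'

theorem blowUp_apply_eq_div [Fintype α] [DecidableEq α]
    {L : (K : Finset α) → ({i // i ∈ K} → ℝ)} (hL : L ∈ blowUp α)
    {K H : Finset α} (hKH : K ⊆ H) (hρ : ∑ i' : {i' // i' ∈ K}, L H ⟨i'.1, hKH i'.2⟩ ≠ 0)
    {i : α} (hi : i ∈ K) :
    L K ⟨i, hi⟩ = L H ⟨i, hKH hi⟩ / ∑ i' : {i' // i' ∈ K}, L H ⟨i'.1, hKH i'.2⟩ := by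
  rw [hL.2 K H ⟨i, hi⟩ hKH i hi, mul_div_cancel_left₀ _ hρ]

theorem blowUpLift_mem_blowUp [Fintype α] [DecidableEq α] {l : α → ℝ} (hpos : ∀ i, 0 < l i) :
    blowUpLift l ∈ blowUp α := by
  have hρ : ∀ K : Finset α, K.Nonempty → 0 < ∑ i ∈ K, l i :=
    fun K hK => Finset.sum_pos (fun i _ => hpos i) hK
  refine ⟨fun K hK => ⟨fun i => div_nonneg (hpos i).le (hρ K hK).le, ?_⟩,
    fun K H hK hKH i hi => ?_⟩
  · simp only [blowUpLift]
    rw [← Finset.sum_div, Finset.sum_coe_sort K l, div_self (hρ K hK).ne']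
  · have hH : H.Nonempty := hK.mono hKH
    simp only [blowUpLift]
    rw [← Finset.sum_div, Finset.sum_coe_sort K l]
    field_simp [(hρ K hK).ne', (hρ H hH).ne']

theorem blowUpLift_univ [Fintype α] {l : α → ℝ} (hsum : ∑ i, l i = 1) (i : α) :
    blowUpLift l Finset.univ ⟨i, Finset.mem_univ i⟩ = l i := by
  rw [blowUpLift, hsum, div_one]

theorem eq_blowUpLift_of_mem_blowUp [Fintype α] [DecidableEq α] {l : α → ℝ}
    (hpos : ∀ i, 0 < l i) {L : (K : Finset α) → ({i // i ∈ K} → ℝ)} (hL : L ∈ blowUp α)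
    (hV : ∀ i : α, L Finset.univ ⟨i, Finset.mem_univ i⟩ = l i) : L = blowUpLift l := by
  funext K ⟨i, hi⟩
  have hρ : ∑ i' : {i' // i' ∈ K}, L Finset.univ ⟨i'.1, Finset.mem_univ i'.1⟩ = ∑ i' ∈ K, l i' :=
    (Finset.sum_congr rfl fun i' _ => hV i'.1).trans (Finset.sum_coe_sort K l)
  have hρ_pos : 0 < ∑ i' ∈ K, l i' := Finset.sum_pos (fun i _ => hpos i) ⟨i, hi⟩
  rw [blowUp_apply_eq_div hL (Finset.subset_univ K) (hρ ▸ hρ_pos.ne') hi, hρ, hV]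
  rfl

end BlowUp

theorem statement15_general {V : Type*} [Fintype V] [DecidableEq V]
    (l : V → ℝ) (hpos : ∀ i, 0 < l i) (hsum : ∑ i, l i = 1) :
    (∃! L : (K : Finset V) → ({i // i ∈ K} → ℝ),
      L ∈ blowUp V ∧ ∀ i : V, L Finset.univ ⟨i, Finset.mem_univ i⟩ = l i) ∧
    (∀ L : (K : Finset V) → ({i // i ∈ K} → ℝ),
      L ∈ blowUp V → (∀ i : V, L Finset.univ ⟨i, Finset.mem_univ i⟩ = l i) →
      ∀ (K : Finset V) (i : V) (hi : i ∈ K), L K ⟨i, hi⟩ = l i / ∑ i' ∈ K, l i') := by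
  refine ⟨⟨blowUpLift l, ⟨blowUpLift_mem_blowUp hpos, blowUpLift_univ hsum⟩,
    fun L ⟨hL, hV⟩ => eq_blowUpLift_of_mem_blowUp hpos hL hV⟩, ?_⟩
  intro L hL hV K i hi
  rw [eq_blowUpLift_of_mem_blowUp hpos hL hV]
  rfl

/-- For every `λ` in the open simplex on `V` there is exactly one point
of the blow-up `T̃` lying over it (i.e. with `λ^V = λ`), and it is given by
`λ^K_i = λ_i / ∑_{i'∈K} λ_{i'}`. -/
theorem statement15 {V : Type*} [Fintype V] [DecidableEq V] [Nonempty V]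
    (l : V → ℝ) (hpos : ∀ i, 0 < l i) (hsum : ∑ i, l i = 1) :
    (∃! L : (K : Finset V) → ({i // i ∈ K} → ℝ),
      L ∈ blowUp V ∧ ∀ i : V, L Finset.univ ⟨i, Finset.mem_univ i⟩ = l i) ∧
    (∀ L : (K : Finset V) → ({i // i ∈ K} → ℝ),
      L ∈ blowUp V → (∀ i : V, L Finset.univ ⟨i, Finset.mem_univ i⟩ = l i) →
      ∀ (K : Finset V) (i : V) (hi : i ∈ K), L K ⟨i, hi⟩ = l i / ∑ i' ∈ K, l i') :=
  statement15_general l hpos hsum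
end

section
/- Let V be a finite nonempty set and F = (V_0, …, V_m) an ordered partition of V into nonempty parts. Let T̃ be the blow-up of the simplex on V, and for each j let T̃_j be the blow-up of the simplex on V_j (defined by the same construction with V_j in place of V). Let Φ_F ⊆ T̃ be the set of families (λ^K) ∈ T̃ such that λ^{{i,i'}}_{i'} = 0 whenever i ∈ V_j, i' ∈ V_{j'} and j < j' (where {i,i'} is the two-element subset of V). Then the map Φ_F → ∏_{j=0}^{m} T̃_j sending (λ^K)_{∅≠K⊆V} to the tuple of restricted families ((λ^K)_{∅≠K⊆V_j})_{j=0}^{m} is a bijection. Its inverse sends (μ^{(j)}) ∈ ∏_j T̃_j to the family (λ^K) defined as follows: for a nonempty K ⊆ V, let j(K) = min{ j : K ∩ V_j ≠ ∅ } and L = K ∩ V_{j(K)}; then λ^K_i = (μ^{(j(K))})^L_i for i ∈ L, and λ^K_i = 0 for i ∈ K ∖ L. -/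
/-- The restriction map sending a family `(λ^K)_{K ⊆ V}` to, for each part `P j`, the
family of its components at subsets of `P j`. -/
def restrictBlowUp {V : Type*} [Fintype V] [DecidableEq V] {m : ℕ}
    (P : Fin (m + 1) → Finset V)
    (L : (K : Finset V) → ({i // i ∈ K} → ℝ)) (j : Fin (m + 1))
    (K' : Finset {x // x ∈ P j}) (i : {y // y ∈ K'}) : ℝ :=
  L (K'.map (Function.Embedding.subtype fun x => x ∈ P j))
    ⟨i.1.1, Finset.mem_map_of_mem _ i.2⟩


section Aux

variable {β : Type*} [DecidableEq β]

/-- Extend a function on a finset subtype by zero. -/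
noncomputable def ext0 (T : Finset β) (f : {i // i ∈ T} → ℝ) : β → ℝ :=
  fun x => if h : x ∈ T then f ⟨x, h⟩ else 0

lemma ext0_apply (T : Finset β) (f : {i // i ∈ T} → ℝ) (x : β) (h : x ∈ T) :
    ext0 T f x = f ⟨x, h⟩ := dif_pos h

lemma sum_eq_ext0 (T : Finset β) (f : {i // i ∈ T} → ℝ) :
    ∑ i : {i // i ∈ T}, f i = ∑ x ∈ T, ext0 T f x := by
  rw [← Finset.sum_coe_sort T (ext0 T f)]
  exact Finset.sum_congr rfl fun i _ => by simp [ext0, i.2]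

lemma Lcongr (L : (K : Finset β) → ({i // i ∈ K} → ℝ)) {K1 K2 : Finset β} (h : K1 = K2)
    (i : β) (h1 : i ∈ K1) (h2 : i ∈ K2) : L K1 ⟨i, h1⟩ = L K2 ⟨i, h2⟩ := by subst h; rfl

lemma sum_subtype_subset {K1 K2 : Finset β} (h12 : K1 ⊆ K2) (f : {i // i ∈ K2} → ℝ)
    (hz : ∀ (i : β) (hi : i ∈ K2), i ∉ K1 → f ⟨i, hi⟩ = 0) :
    ∑ i : {i // i ∈ K2}, f i = ∑ i : {i // i ∈ K1}, f ⟨i.1, h12 i.2⟩ := by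
  rw [sum_eq_ext0, sum_eq_ext0]
  rw [← Finset.sum_subset h12 (fun x hx2 hx1 => by
    rw [ext0_apply _ _ _ hx2]; exact hz x hx2 hx1)]
  exact Finset.sum_congr rfl fun x hx => by
    rw [ext0_apply _ _ _ hx, ext0_apply _ _ _ (h12 hx)]

lemma sum_map_subtype (p : β → Prop) [DecidablePred p] (K' : Finset {x // p x})
    (f : {i // i ∈ K'.map (Function.Embedding.subtype p)} → ℝ) :
    ∑ i : {i // i ∈ K'.map (Function.Embedding.subtype p)}, f i =
      ∑ y : {y // y ∈ K'}, f ⟨y.1.1, Finset.mem_map_of_mem _ y.2⟩ := by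
  rw [sum_eq_ext0, sum_eq_ext0, Finset.sum_map]
  exact Finset.sum_congr rfl fun y hy => by
    rw [ext0_apply _ _ _ (Finset.mem_map_of_mem _ hy), ext0_apply _ _ _ hy]; rfl

lemma sum_subtype_subtype (p : β → Prop) [DecidablePred p] (S : Finset β)
    (hS : ∀ x ∈ S, p x) (f : {y // y ∈ S.subtype p} → ℝ) :
    ∑ y : {y // y ∈ S.subtype p}, f y =
      ∑ i : {i // i ∈ S}, f ⟨⟨i.1, hS _ i.2⟩, Finset.mem_subtype.mpr i.2⟩ :=
  (Fintype.sum_equiv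
    (⟨fun i => ⟨⟨i.1, hS _ i.2⟩, Finset.mem_subtype.mpr i.2⟩,
     fun y => ⟨y.1.1, Finset.mem_subtype.mp y.2⟩,
     fun i => rfl, fun y => rfl⟩ : {i // i ∈ S} ≃ {y // y ∈ S.subtype p})
    (fun i => f ⟨⟨i.1, hS _ i.2⟩, Finset.mem_subtype.mpr i.2⟩) f (fun i => rfl)).symm

end Aux

section Main

variable {V : Type*} [Fintype V] [DecidableEq V] {m : ℕ}

/-- Index of the first part meeting `K`. -/
noncomputable def minJ (P : Fin (m + 1) → Finset V) (K : Finset V) : Fin (m + 1) :=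
  if h : (Finset.univ.filter fun j => (K ∩ P j).Nonempty).Nonempty then
    (Finset.univ.filter fun j => (K ∩ P j).Nonempty).min' h else 0

lemma minJ_min (P : Fin (m + 1) → Finset V) {K : Finset V} {j : Fin (m + 1)}
    (hj : (K ∩ P j).Nonempty) : minJ P K ≤ j := by
  have hjm : j ∈ Finset.univ.filter fun j => (K ∩ P j).Nonempty := by
    simp [hj]
  rw [minJ, dif_pos ⟨j, hjm⟩]
  exact Finset.min'_le _ _ hjm

lemma minJ_spec (P : Fin (m + 1) → Finset V) (hcover : ∀ i : V, ∃ j, i ∈ P j)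
    {K : Finset V} (hK : K.Nonempty) : (K ∩ P (minJ P K)).Nonempty := by
  obtain ⟨i, hi⟩ := hK
  obtain ⟨j, hj⟩ := hcover i
  have hjm : j ∈ Finset.univ.filter fun j => (K ∩ P j).Nonempty := by
    simp; exact ⟨i, Finset.mem_inter.mpr ⟨hi, hj⟩⟩
  have hne : (Finset.univ.filter fun j => (K ∩ P j).Nonempty).Nonempty := ⟨j, hjm⟩
  rw [minJ, dif_pos hne]
  have := Finset.min'_mem _ hne
  exact (Finset.mem_filter.mp this).2

lemma minJ_lt_empty (P : Fin (m + 1) → Finset V) {K : Finset V} {j : Fin (m + 1)}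
    (hj : j < minJ P K) : K ∩ P j = ∅ := by
  rw [← Finset.not_nonempty_iff_eq_empty]
  exact fun h => absurd (minJ_min P h) (not_le.mpr hj)

lemma minJ_eq (P : Fin (m + 1) → Finset V)
    (hdisj : ∀ j j', j ≠ j' → Disjoint (P j) (P j'))
    (hcover : ∀ i : V, ∃ j, i ∈ P j) {K : Finset V} {j : Fin (m + 1)}
    (hK : K.Nonempty) (hKP : K ⊆ P j) : minJ P K = j := by
  obtain ⟨x, hx⟩ := minJ_spec P hcover hK
  by_contra hne
  exact Finset.disjoint_left.mp (hdisj _ _ hne) (Finset.mem_inter.mp hx).2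
    (hKP (Finset.mem_inter.mp hx).1)

/-- Restriction of an element of the blow-up is in the blow-up of the part. -/
lemma restrict_mem (P : Fin (m + 1) → Finset V) (j : Fin (m + 1))
    {L : (K : Finset V) → ({i // i ∈ K} → ℝ)} (hL : L ∈ blowUp V) :
    restrictBlowUp P L j ∈ blowUp {x // x ∈ P j} := by
  constructor
  · intro K' hK'
    have hKne : (K'.map (Function.Embedding.subtype fun x => x ∈ P j)).Nonempty :=
      hK'.map
    obtain ⟨h1, h2⟩ := hL.1 _ hKne
    refine ⟨fun i => h1 _, ?_⟩
    rw [show (∑ i : {y // y ∈ K'}, restrictBlowUp P L j K' i) =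
      ∑ y : {y // y ∈ K'},
        L (K'.map (Function.Embedding.subtype fun x => x ∈ P j))
          ⟨y.1.1, Finset.mem_map_of_mem _ y.2⟩ from rfl,
      ← sum_map_subtype _ K' (L _)]
    exact h2
  · intro K' H' hK' hsub i hi
    have key := hL.2 (K'.map (Function.Embedding.subtype fun x => x ∈ P j))
      (H'.map (Function.Embedding.subtype fun x => x ∈ P j)) (hK'.map)
      (Finset.map_subset_map.mpr hsub) i.1 (Finset.mem_map_of_mem _ hi)
    rw [sum_map_subtype (fun x => x ∈ P j) K'
      (fun z => L (H'.map (Function.Embedding.subtype fun x => x ∈ P j))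
        ⟨z.1, Finset.map_subset_map.mpr hsub z.2⟩)] at key
    exact key

end Main

section Face

variable {V : Type*} [Fintype V] [DecidableEq V] {m : ℕ}
variable {P : Fin (m + 1) → Finset V}
variable {L : (K : Finset V) → ({i // i ∈ K} → ℝ)}

lemma face_zero (hcover : ∀ i : V, ∃ j, i ∈ P j) (hL : L ∈ blowUp V)
    (hface : ∀ (i i' : V) (j j' : Fin (m + 1)), i ∈ P j → i' ∈ P j' → j < j' →
      L {i, i'} ⟨i', by simp⟩ = 0)
    (K : Finset V) (j : Fin (m + 1)) (hj : (K ∩ P j).Nonempty)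
    (hlt : ∀ j' : Fin (m + 1), j' < j → K ∩ P j' = ∅)
    (i : V) (hi : i ∈ K) (hip : i ∉ P j) : L K ⟨i, hi⟩ = 0 := by
  obtain ⟨j'', hij''⟩ := hcover i
  have hne : j ≠ j'' := fun h => hip (h ▸ hij'')
  have hjj : j < j'' := by
    rcases lt_or_gt_of_ne hne with h | h
    · exact h
    · exact absurd (hlt j'' h ▸ Finset.mem_inter.mpr ⟨hi, hij''⟩) (Finset.notMem_empty i)
  obtain ⟨i₀, hi₀⟩ := hj
  have hi₀K : i₀ ∈ K := (Finset.mem_inter.mp hi₀).1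
  have hi₀P : i₀ ∈ P j := (Finset.mem_inter.mp hi₀).2
  have hpair : ({i₀, i} : Finset V) ⊆ K := by
    intro x hx
    rcases Finset.mem_insert.mp hx with rfl | hx
    · exact hi₀K
    · rw [Finset.mem_singleton.mp hx]; exact hi
  have hmem : i ∈ ({i₀, i} : Finset V) := by simp
  have h0 : L {i₀, i} ⟨i, hmem⟩ = 0 := hface i₀ i j j'' hi₀P hij'' hjj
  have hc := hL.2 {i₀, i} K ⟨i₀, by simp⟩ hpair i hmem
  rw [hc, h0, mul_zero]

lemma face_eval (hcover : ∀ i : V, ∃ j, i ∈ P j) (hL : L ∈ blowUp V)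
    (hface : ∀ (i i' : V) (j j' : Fin (m + 1)), i ∈ P j → i' ∈ P j' → j < j' →
      L {i, i'} ⟨i', by simp⟩ = 0)
    (K : Finset V) (j : Fin (m + 1)) (hj : (K ∩ P j).Nonempty)
    (hlt : ∀ j' : Fin (m + 1), j' < j → K ∩ P j' = ∅)
    (i : V) (hi : i ∈ K) (h : i ∈ P j) :
    L K ⟨i, hi⟩ = L (K ∩ P j) ⟨i, Finset.mem_inter.mpr ⟨hi, h⟩⟩ := by
  have hsub : K ∩ P j ⊆ K := Finset.inter_subset_left
  have hKne : K.Nonempty := ⟨i, hi⟩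
  have hcompat := hL.2 (K ∩ P j) K hj hsub i (Finset.mem_inter.mpr ⟨hi, h⟩)
  have hsum : (∑ i' : {i' // i' ∈ K ∩ P j}, L K ⟨i'.1, hsub i'.2⟩) = 1 := by
    rw [← sum_subtype_subset hsub (L K) (fun i' hi' hni' =>
      face_zero hcover hL hface K j hj hlt i' hi'
        (fun hip => hni' (Finset.mem_inter.mpr ⟨hi', hip⟩)))]
    exact (hL.1 K hKne).2
  rw [hcompat, hsum, one_mul]

lemma face_eval_restrict (hcover : ∀ i : V, ∃ j, i ∈ P j) (hL : L ∈ blowUp V)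
    (hface : ∀ (i i' : V) (j j' : Fin (m + 1)), i ∈ P j → i' ∈ P j' → j < j' →
      L {i, i'} ⟨i', by simp⟩ = 0)
    (K : Finset V) (j : Fin (m + 1)) (hj : (K ∩ P j).Nonempty)
    (hlt : ∀ j' : Fin (m + 1), j' < j → K ∩ P j' = ∅)
    (i : V) (hi : i ∈ K) :
    L K ⟨i, hi⟩ =
      if h : i ∈ P j then
        restrictBlowUp P L j (K.subtype fun x => x ∈ P j)
          ⟨⟨i, h⟩, Finset.mem_subtype.mpr hi⟩
      else 0 := by
  by_cases h : i ∈ P j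
  · rw [dif_pos h, face_eval hcover hL hface K j hj hlt i hi h]
    have heq : K ∩ P j =
        (K.subtype fun x => x ∈ P j).map (Function.Embedding.subtype fun x => x ∈ P j) := by
      rw [Finset.subtype_map, Finset.filter_mem_eq_inter]
    exact Lcongr L heq i _ _
  · rw [dif_neg h]
    exact face_zero hcover hL hface K j hj hlt i hi h

end Face

section Inv

variable {V : Type*} [Fintype V] [DecidableEq V] {m : ℕ}

/-- The inverse map: assemble an element of the face from the family of blow-ups. -/
noncomputable def invB (P : Fin (m + 1) → Finset V)
    (M : ∀ j, (K' : Finset {x // x ∈ P j}) → ({y // y ∈ K'} → ℝ)) :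
    (K : Finset V) → ({i // i ∈ K} → ℝ) :=
  fun K i =>
    if h : i.1 ∈ P (minJ P K) then
      M (minJ P K) ((K ∩ P (minJ P K)).subtype fun x => x ∈ P (minJ P K))
        ⟨⟨i.1, h⟩, Finset.mem_subtype.mpr (Finset.mem_inter.mpr ⟨i.2, h⟩)⟩
    else 0

variable {P : Fin (m + 1) → Finset V}
variable {M : ∀ j, (K' : Finset {x // x ∈ P j}) → ({y // y ∈ K'} → ℝ)}

lemma invB_eval {K : Finset V} {j : Fin (m + 1)} (hj : minJ P K = j)
    (i : V) (hi : i ∈ K) (hp : i ∈ P j) :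
    invB P M K ⟨i, hi⟩ =
      M j ((K ∩ P j).subtype fun x => x ∈ P j)
        ⟨⟨i, hp⟩, Finset.mem_subtype.mpr (Finset.mem_inter.mpr ⟨hi, hp⟩)⟩ := by
  subst hj; exact dif_pos hp

lemma invB_eval_zero {K : Finset V} {j : Fin (m + 1)} (hj : minJ P K = j)
    (i : V) (hi : i ∈ K) (hp : i ∉ P j) : invB P M K ⟨i, hi⟩ = 0 := by
  subst hj; exact dif_neg hp

lemma invB_sum (hcover : ∀ i : V, ∃ j, i ∈ P j)
    (hM : ∀ j, M j ∈ blowUp {x // x ∈ P j}) {K : Finset V} (hK : K.Nonempty) :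
    ∑ i : {i // i ∈ K}, invB P M K i = 1 := by
  set j := minJ P K with hj
  have hjK : (K ∩ P j).Nonempty := minJ_spec P hcover hK
  have hsub : K ∩ P j ⊆ K := Finset.inter_subset_left
  rw [sum_subtype_subset hsub (invB P M K) (fun i hi hni =>
    invB_eval_zero hj.symm i hi (fun hp => hni (Finset.mem_inter.mpr ⟨hi, hp⟩)))]
  have hstep : ∀ i' : {i' // i' ∈ K ∩ P j},
      invB P M K ⟨i'.1, hsub i'.2⟩ =
        M j ((K ∩ P j).subtype fun x => x ∈ P j)
          ⟨⟨i'.1, (Finset.mem_inter.mp i'.2).2⟩, Finset.mem_subtype.mpr i'.2⟩ := by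
    intro i'
    rw [invB_eval hj.symm i'.1 (hsub i'.2) (Finset.mem_inter.mp i'.2).2]
  rw [Finset.sum_congr rfl (fun i' _ => hstep i')]
  rw [← sum_subtype_subtype (fun x => x ∈ P j) (K ∩ P j)
    (fun x hx => (Finset.mem_inter.mp hx).2) (M j _)]
  have hne : ((K ∩ P j).subtype fun x => x ∈ P j).Nonempty := by
    obtain ⟨x, hx⟩ := hjK
    exact ⟨⟨x, (Finset.mem_inter.mp hx).2⟩, Finset.mem_subtype.mpr hx⟩
  exact ((hM j).1 _ hne).2

lemma invB_mem (hcover : ∀ i : V, ∃ j, i ∈ P j)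
    (hM : ∀ j, M j ∈ blowUp {x // x ∈ P j}) : invB P M ∈ blowUp V := by
  constructor
  · intro K hK
    refine ⟨fun i => ?_, invB_sum hcover hM hK⟩
    rcases eq_or_ne (minJ P K) (minJ P K) with _ | h
    · by_cases hp : i.1 ∈ P (minJ P K)
      · rw [show invB P M K i = invB P M K ⟨i.1, i.2⟩ from rfl,
          invB_eval rfl i.1 i.2 hp]
        have hne : ((K ∩ P (minJ P K)).subtype fun x => x ∈ P (minJ P K)).Nonempty :=
          ⟨⟨i.1, hp⟩, Finset.mem_subtype.mpr (Finset.mem_inter.mpr ⟨i.2, hp⟩)⟩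
        exact ((hM _).1 _ hne).1 _
      · rw [show invB P M K i = invB P M K ⟨i.1, i.2⟩ from rfl,
          invB_eval_zero rfl i.1 i.2 hp]
    · exact absurd rfl h
  · intro K H hK hKH i hi
    have hH : H.Nonempty := hK.mono hKH
    have hjHK : minJ P H ≤ minJ P K :=
      minJ_min P ((minJ_spec P hcover hK).mono (Finset.inter_subset_inter hKH le_rfl))
    rcases eq_or_lt_of_le hjHK with heq | hlt
    · -- same first part
      by_cases hp : i ∈ P (minJ P H)
      · have hpK : i ∈ P (minJ P K) := heq ▸ hp
        have hjH : minJ P H = minJ P H := rfl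
        set j := minJ P H with hj
        have hKj : minJ P K = j := heq.symm
        rw [invB_eval rfl i (hKH hi) hp, invB_eval hKj i hi (hj ▸ hp)]
        have hsub' : ((K ∩ P j).subtype fun x => x ∈ P j) ⊆
            ((H ∩ P j).subtype fun x => x ∈ P j) := by
          intro a ha
          exact Finset.mem_subtype.mpr
            (Finset.inter_subset_inter hKH le_rfl (Finset.mem_subtype.mp ha))
        have hKne' : ((K ∩ P j).subtype fun x => x ∈ P j).Nonempty := by
          obtain ⟨x, hx⟩ := minJ_spec P hcover hK
          rw [hKj] at hx
          exact ⟨⟨x, (Finset.mem_inter.mp hx).2⟩, Finset.mem_subtype.mpr hx⟩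
        have hcomp := (hM j).2 _ _ hKne' hsub' ⟨i, hp⟩
          (Finset.mem_subtype.mpr (Finset.mem_inter.mpr ⟨hi, hp⟩))
        rw [hcomp]
        congr 1
        -- sums agree
        have hsubK : K ∩ P j ⊆ K := Finset.inter_subset_left
        rw [sum_subtype_subset hsubK
          (fun i' : {i' // i' ∈ K} => invB P M H ⟨i'.1, hKH i'.2⟩)
          (fun i' hi' hni' => invB_eval_zero rfl i' (hKH hi')
            (fun hp' => hni' (Finset.mem_inter.mpr ⟨hi', hp'⟩)))]
        have hstep : ∀ i' : {i' // i' ∈ K ∩ P j},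
            invB P M H ⟨i'.1, hKH (hsubK i'.2)⟩ =
              M j ((H ∩ P j).subtype fun x => x ∈ P j)
                ⟨⟨i'.1, (Finset.mem_inter.mp i'.2).2⟩,
                  Finset.mem_subtype.mpr (Finset.mem_inter.mpr
                    ⟨hKH (hsubK i'.2), (Finset.mem_inter.mp i'.2).2⟩)⟩ := fun i' =>
          invB_eval rfl i'.1 (hKH (hsubK i'.2)) (Finset.mem_inter.mp i'.2).2
        rw [Finset.sum_congr rfl (fun i' _ => hstep i')]
        rw [sum_subtype_subtype (fun x => x ∈ P j) (K ∩ P j)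
          (fun x hx => (Finset.mem_inter.mp hx).2)
          (fun y => M j ((H ∩ P j).subtype fun x => x ∈ P j) ⟨y.1, hsub' y.2⟩)]
      · -- i not in first part: both sides vanish
        rw [invB_eval_zero rfl i (hKH hi) hp,
          invB_eval_zero (j := minJ P K) rfl i hi (heq ▸ hp), mul_zero]
    · -- first part of H strictly earlier: everything vanishes
      have hempty : K ∩ P (minJ P H) = ∅ := minJ_lt_empty P hlt
      have hz : ∀ (i' : V) (hi' : i' ∈ K), invB P M H ⟨i', hKH hi'⟩ = 0 := by
        intro i' hi'
        refine invB_eval_zero rfl i' (hKH hi') (fun hp => ?_)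
        exact absurd (hempty ▸ Finset.mem_inter.mpr ⟨hi', hp⟩) (Finset.notMem_empty i')
      rw [hz i hi, Fintype.sum_eq_zero _ (fun i2 : {a // a ∈ K} => hz i2.1 i2.2), zero_mul]

lemma invB_face (hdisj : ∀ j j', j ≠ j' → Disjoint (P j) (P j'))
    (i i' : V) (j j' : Fin (m + 1)) (hij : i ∈ P j) (hij' : i' ∈ P j') (hlt : j < j') :
    invB P M {i, i'} ⟨i', by simp⟩ = 0 := by
  have hjm : minJ P {i, i'} ≤ j :=
    minJ_min P ⟨i, Finset.mem_inter.mpr ⟨by simp, hij⟩⟩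
  refine invB_eval_zero rfl i' (by simp) (fun hp => ?_)
  have hne : minJ P ({i, i'} : Finset V) ≠ j' := fun h => absurd (h ▸ hjm) (not_le.mpr hlt)
  exact Finset.disjoint_left.mp (hdisj _ _ hne) hp hij'

lemma restrict_invB (hdisj : ∀ j j', j ≠ j' → Disjoint (P j) (P j'))
    (hcover : ∀ i : V, ∃ j, i ∈ P j) : restrictBlowUp P (invB P M) = M := by
  funext j K' i
  have hK'ne : K'.Nonempty := ⟨i.1, i.2⟩
  set K : Finset V := K'.map (Function.Embedding.subtype fun x => x ∈ P j) with hKdef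
  have hKsub : K ⊆ P j := fun x hx => K'.property_of_mem_map_subtype hx
  have hminJ : minJ P K = j := minJ_eq P hdisj hcover (hK'ne.map) hKsub
  have hmem : i.1.1 ∈ K := Finset.mem_map_of_mem _ i.2
  rw [show restrictBlowUp P (invB P M) j K' i = invB P M K ⟨i.1.1, hmem⟩ from rfl,
    invB_eval hminJ i.1.1 hmem i.1.2]
  have hKP : K ∩ P j = K := Finset.inter_eq_left.mpr hKsub
  have hsubt : ((K ∩ P j).subtype fun x => x ∈ P j) = K' := by
    rw [hKP]
    ext a
    simp only [Finset.mem_subtype, hKdef, Finset.mem_map]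
    constructor
    · rintro ⟨b, hb, hba⟩
      rwa [Subtype.ext hba] at hb
    · intro h
      exact ⟨a, h, rfl⟩
  exact Lcongr (M j) hsubt i.1 _ i.2

end Inv

/-- Let `F = (V_0,…,V_m)` be an ordered partition of `V` into nonempty
parts `P j`, and let `Φ_F ⊆ T̃` be the face of the blow-up cut out by the equations
`λ^{{i,i'}}_{i'} = 0` for `i ∈ V_j`, `i' ∈ V_{j'}`, `j < j'`.  Then the restriction map is
a bijection from `Φ_F` onto `∏_j T̃_j`, and its inverse is given explicitly: for
`K ⊆ V` with first part met being `P j` (i.e. `K ∩ P j ≠ ∅` and `K ∩ P j' = ∅` for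
`j' < j`), the component `λ^K_i` equals the image family's value at `K ∩ P j` when
`i ∈ P j`, and `0` otherwise. -/
theorem statement16 {V : Type*} [Fintype V] [DecidableEq V] [Nonempty V] (m : ℕ)
    (P : Fin (m + 1) → Finset V) (hne : ∀ j, (P j).Nonempty)
    (hdisj : ∀ j j', j ≠ j' → Disjoint (P j) (P j'))
    (hcover : ∀ i : V, ∃ j, i ∈ P j) :
    Set.BijOn (restrictBlowUp P)
      {L | L ∈ blowUp V ∧ ∀ (i i' : V) (j j' : Fin (m + 1)),
        i ∈ P j → i' ∈ P j' → j < j' →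
        L {i, i'} ⟨i', by simp⟩ = 0}
      (Set.univ.pi fun j => blowUp {x // x ∈ P j}) ∧
    (∀ L ∈ ({L | L ∈ blowUp V ∧ ∀ (i i' : V) (j j' : Fin (m + 1)),
        i ∈ P j → i' ∈ P j' → j < j' → L {i, i'} ⟨i', by simp⟩ = 0} :
          Set ((K : Finset V) → ({i // i ∈ K} → ℝ))),
      ∀ (K : Finset V) (j : Fin (m + 1)), (K ∩ P j).Nonempty →
        (∀ j' : Fin (m + 1), j' < j → K ∩ P j' = ∅) →
        ∀ (i : V) (hi : i ∈ K),
          L K ⟨i, hi⟩ =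
            if h : i ∈ P j then
              restrictBlowUp P L j (K.subtype fun x => x ∈ P j)
                ⟨⟨i, h⟩, Finset.mem_subtype.mpr hi⟩
            else 0) := by
  constructor
  · refine ⟨?_, ?_, ?_⟩
    · -- maps to
      intro L hL
      rw [Set.mem_univ_pi]
      intro j
      exact restrict_mem P j hL.1
    · -- injectivity
      intro L1 hL1 L2 hL2 hres
      funext K i
      have hK : K.Nonempty := ⟨i.1, i.2⟩
      have hj := minJ_spec P hcover hK
      have h1 := face_eval_restrict hcover hL1.1 hL1.2 K (minJ P K) hj
        (fun j' h => minJ_lt_empty P h) i.1 i.2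
      have h2 := face_eval_restrict hcover hL2.1 hL2.2 K (minJ P K) hj
        (fun j' h => minJ_lt_empty P h) i.1 i.2
      rw [show L1 K i = L1 K ⟨i.1, i.2⟩ from rfl, h1]
      simp only [hres]
      rw [← h2]
    · -- surjectivity
      intro M hM
      have hMj : ∀ j, M j ∈ blowUp {x // x ∈ P j} := fun j => hM j (Set.mem_univ j)
      exact ⟨invB P M,
        ⟨invB_mem hcover hMj,
         fun i i' j j' h h' hlt => invB_face hdisj i i' j j' h h' hlt⟩,
        restrict_invB hdisj hcover⟩
  · intro L hL K j hj hlt i hi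
    exact face_eval_restrict hcover hL.1 hL.2 K j hj hlt i hi
end
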